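/- arXiv:1504.01721 — 8 statements merged into one kernel-verified Lean document; each statement's English description precedes it below -/
import Mathlib

section
/- For a nontrivial strongly connected digraph D, rc*(D) = 2 if and only if src*(D) = 2. -/
open scoped Classical

namespace RainbowDigraph

variable {V : Type}

/-- `p` is a directed path (walk) from `x` to `y` in the digraph `D`. -/
def IsPathFrom (D : V → V → Prop) (x y : V) (p : List V) : Prop :=
  List.Chain' D p ∧ p.head? = some x ∧ p.getLast? = some y

/-- The arcs of `p` receive pairwise distinct colors under the arc-coloring `c`. -/
def RainbowPath {k : ℕ} (c : V → V → Fin k) (p : List V) : Prop :=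
  ((p.zip p.tail).map (fun e => c e.1 e.2)).Nodup

/-- Directed distance: the minimum number of arcs of a directed `x y`-path. -/
noncomputable def dist (D : V → V → Prop) (x y : V) : ℕ :=
  sInf {m | ∃ p, IsPathFrom D x y p ∧ p.length = m + 1}

/-- Directed diameter: the maximum distance over ordered pairs of vertices. -/
noncomputable def diam (D : V → V → Prop) : ℕ :=
  sSup {d | ∃ x y, d = dist D x y}

/-- Strong connectivity of a digraph. -/
def Connected (D : V → V → Prop) : Prop :=
  ∀ x y : V, ∃ p, IsPathFrom D x y p

/-- `c` is a rainbow connected arc-coloring of `D`. -/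
def IsRainbowConnected (D : V → V → Prop) {k : ℕ} (c : V → V → Fin k) : Prop :=
  ∀ x y : V, x ≠ y → ∃ p, IsPathFrom D x y p ∧ RainbowPath c p

/-- `c` is a strong rainbow connected arc-coloring of `D`: every ordered pair of
distinct vertices is joined by a rainbow geodesic. -/
def IsStrongRainbowConnected (D : V → V → Prop) {k : ℕ} (c : V → V → Fin k) : Prop :=
  ∀ x y : V, x ≠ y →
    ∃ p, IsPathFrom D x y p ∧ RainbowPath c p ∧ p.length = dist D x y + 1

/-- The rainbow connection number `rc*(D)`. -/
noncomputable def rcStar (D : V → V → Prop) : ℕ :=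
  sInf {k | ∃ c : V → V → Fin k, IsRainbowConnected D c}

/-- The strong rainbow connection number `src*(D)`. -/
noncomputable def srcStar (D : V → V → Prop) : ℕ :=
  sInf {k | ∃ c : V → V → Fin k, IsStrongRainbowConnected D c}

/-- The biorientation of a graph `G`: each edge `uv` is replaced by arcs `uv` and `vu`. -/
def bior (G : SimpleGraph V) : V → V → Prop := fun x y => G.Adj x y

/-- The (undirected) rainbow connection number `rc(G)`: minimum over symmetric
(edge-)colorings that are rainbow connected. -/
noncomputable def rc (G : SimpleGraph V) : ℕ :=
  sInf {k | ∃ c : V → V → Fin k, (∀ x y, c x y = c y x) ∧ IsRainbowConnected G.Adj c}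

/-- The (undirected) strong rainbow connection number `src(G)`. -/
noncomputable def src (G : SimpleGraph V) : ℕ :=
  sInf {k | ∃ c : V → V → Fin k, (∀ x y, c x y = c y x) ∧ IsStrongRainbowConnected G.Adj c}

/-- The circulant digraph `C_n(S)` on `ZMod n`: arc `i → j` iff `j - i ≡ s (mod n)`
for some `s ∈ S`. -/
def circulant (n : ℕ) (S : Set ℕ) : ZMod n → ZMod n → Prop :=
  fun i j => ∃ s ∈ S, j = i + (s : ZMod n)

/-- The biorientation of the cycle `C_n`, on vertices `ZMod n`. -/
def cycleBior (n : ℕ) : ZMod n → ZMod n → Prop :=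
  fun i j => j = i + 1 ∨ i = j + 1

/-- The biorientation of the path `P_n`, on vertices `Fin n`. -/
def pathBior (n : ℕ) : Fin n → Fin n → Prop :=
  fun i j => (j : ℕ) = (i : ℕ) + 1 ∨ (i : ℕ) = (j : ℕ) + 1

/-- The biorientation of the star `K_{1,n}`, with center `0`. -/
def starBior (n : ℕ) : Fin (n + 1) → Fin (n + 1) → Prop :=
  fun x y => x ≠ y ∧ (x = 0 ∨ y = 0)

lemma rainbow_of_length_le_two {k : ℕ} (c : V → V → Fin k) (p : List V)
    (h : p.length ≤ 2) : RainbowPath c p := by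
  unfold RainbowPath
  match p, h with
  | [], _ => simp
  | [a], _ => simp
  | [a, b], _ => simp

lemma strong_of_rainbow {D : V → V → Prop} {k : ℕ} (hk : k ≤ 2) (c : V → V → Fin k)
    (h : IsRainbowConnected D c) : IsStrongRainbowConnected D c := by
  intro x y hxy
  obtain ⟨p, hp, hr⟩ := h x y hxy
  have hpne : p ≠ [] := by
    intro h0
    rw [h0] at hp
    simp [IsPathFrom] at hp
  have hplen : 1 ≤ p.length := List.length_pos_iff.mpr hpne
  have hcol : p.length - 1 ≤ k := by
    have h1 : ((p.zip p.tail).map (fun e => c e.1 e.2)).length ≤ k := by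
      have := hr.length_le_card
      simpa using this
    have h2 : ((p.zip p.tail).map (fun e => c e.1 e.2)).length = p.length - 1 := by
      simp only [List.length_map, List.length_zip, List.length_tail]
      omega
    omega
  have hdist_le : dist D x y ≤ p.length - 1 := Nat.sInf_le ⟨p, hp, by omega⟩
  have hSne : {m | ∃ q, IsPathFrom D x y q ∧ q.length = m + 1}.Nonempty :=
    ⟨p.length - 1, p, hp, by omega⟩
  obtain ⟨q, hq, hqlen⟩ := Nat.sInf_mem hSne
  have hqd : q.length = dist D x y + 1 := hqlen
  have hdist_pos : 1 ≤ dist D x y := by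
    by_contra hc
    have : dist D x y = 0 := by omega
    rw [this] at hqd
    match q, hqd with
    | [a], _ =>
      obtain ⟨_, h2, h3⟩ := hq
      simp at h2 h3
      exact hxy (h2 ▸ h3 ▸ rfl)
  have hdist_le2 : dist D x y ≤ 2 := by omega
  rcases Nat.lt_or_ge (dist D x y) 2 with hlt | hge
  · -- dist = 1, use the geodesic q, which has a single arc
    refine ⟨q, hq, rainbow_of_length_le_two c q (by omega), hqd⟩
  · -- dist = 2, so p itself is a geodesic
    have : p.length = dist D x y + 1 := by omega
    exact ⟨p, hp, hr, this⟩

lemma zero_notMem_rc {D : V → V → Prop} (hne : Nonempty V) :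
    ¬ ∃ c : V → V → Fin 0, IsRainbowConnected D c := by
  rintro ⟨c, -⟩
  obtain ⟨x⟩ := hne
  exact (c x x).elim0

/-- For a nontrivial strongly connected digraph `D`,
`rc*(D) = 2` iff `src*(D) = 2`. -/
theorem stmt4 {V : Type} [Fintype V] (D : V → V → Prop)
    (hcard : 2 ≤ Fintype.card V) (hD : Connected D) :
    rcStar D = 2 ↔ srcStar D = 2 := by
  have hne : Nonempty V := Fintype.card_pos_iff.mp (by omega)
  set R := {k | ∃ c : V → V → Fin k, IsRainbowConnected D c} with hR
  set S := {k | ∃ c : V → V → Fin k, IsStrongRainbowConnected D c} with hS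
  have hSR : S ⊆ R := by
    rintro k ⟨c, hc⟩
    exact ⟨c, fun x y hxy => by
      obtain ⟨p, hp, hr, -⟩ := hc x y hxy
      exact ⟨p, hp, hr⟩⟩
  have hRS : ∀ k ≤ 2, k ∈ R → k ∈ S := by
    rintro k hk ⟨c, hc⟩
    exact ⟨c, strong_of_rainbow hk c hc⟩
  have h0R : 0 ∉ R := zero_notMem_rc hne
  constructor
  · intro h
    have hRne : R.Nonempty := by
      by_contra hemp
      rw [Set.not_nonempty_iff_eq_empty] at hemp
      rw [rcStar, ← hR, hemp] at h
      simp at h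
    have h2R : 2 ∈ R := by
      have := Nat.sInf_mem hRne
      rwa [show sInf R = 2 from h] at this
    have h2S : 2 ∈ S := hRS 2 le_rfl h2R
    have hle : sInf S ≤ 2 := Nat.sInf_le h2S
    have hge : 2 ≤ sInf S := by
      by_contra hc
      push_neg at hc
      have hmem : sInf S ∈ S := Nat.sInf_mem ⟨2, h2S⟩
      have hmemR : sInf S ∈ R := hSR hmem
      have : sInf R ≤ sInf S := Nat.sInf_le hmemR
      rw [show sInf R = 2 from h] at this
      omega
    exact le_antisymm hle hge
  · intro h
    have hSne : S.Nonempty := by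
      by_contra hemp
      rw [Set.not_nonempty_iff_eq_empty] at hemp
      rw [srcStar, ← hS, hemp] at h
      simp at h
    have h2S : 2 ∈ S := by
      have := Nat.sInf_mem hSne
      rwa [show sInf S = 2 from h] at this
    have h2R : 2 ∈ R := hSR h2S
    have hle : sInf R ≤ 2 := Nat.sInf_le h2R
    have hge : 2 ≤ sInf R := by
      by_contra hc
      push_neg at hc
      have hmem : sInf R ∈ R := Nat.sInf_mem ⟨2, h2R⟩
      interval_cases h' : sInf R
      · exact h0R hmem
      · have h1S : 1 ∈ S := hRS 1 (by omega) hmem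
        have : sInf S ≤ 1 := Nat.sInf_le h1S
        rw [show sInf S = 2 from h] at this
        omega
    exact le_antisymm hle hge

end RainbowDigraph
end

section
/- For every n ≥ 4, rc*(bior(C_n)) = src*(bior(C_n)) = ⌈n/2⌉, where bior(C_n) is the biorientation of the cycle on n vertices. -/
open scoped Classical

namespace RainbowDigraph

variable {V : Type}

section Proof8

variable {n : ℕ}

private lemma colors_cons {k : ℕ} (c : ZMod n → ZMod n → Fin k) (a b : ZMod n) (l : List (ZMod n)) :
    (((a :: b :: l).zip (a :: b :: l).tail).map (fun e => c e.1 e.2))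
      = c a b :: (((b :: l).zip (b :: l).tail).map (fun e => c e.1 e.2)) := rfl

private lemma map_range_succ_eq {α : Type*} (g : ℕ → α) (L : ℕ) :
    (List.range (L+1)).map g = g 0 :: (List.range L).map (fun i => g (i+1)) := by
  rw [List.range_succ_eq_map, List.map_cons, List.map_map]
  rfl

private lemma colors_map_range {k : ℕ} (c : ZMod n → ZMod n → Fin k) :
    ∀ (L : ℕ) (g : ℕ → ZMod n),
      ((((List.range (L+1)).map g).zip (((List.range (L+1)).map g).tail)).map
          (fun e => c e.1 e.2))
        = (List.range L).map (fun i => c (g i) (g (i+1))) := by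
  intro L
  induction L with
  | zero => intro g; rfl
  | succ L ih =>
    intro g
    have h2 : (List.range (L+1+1)).map g
        = g 0 :: g 1 :: (List.range L).map (fun i => g (i+1+1)) := by
      rw [map_range_succ_eq g (L+1), map_range_succ_eq (fun i => g (i+1)) L]
    rw [h2, colors_cons]
    have h3 := ih (fun i => g (i+1))
    rw [map_range_succ_eq (fun i => g (i+1)) L] at h3
    rw [h3, map_range_succ_eq (fun i => c (g i) (g (i+1))) L]

private lemma chain_struct :
    ∀ (p : List (ZMod n)) (x : ZMod n), List.Chain (cycleBior n) x p →
    ∃ a b : ℕ, a + b = p.length ∧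
      (x :: p).getLast? = some (x + (a : ZMod n) - (b : ZMod n)) ∧
      (b = 0 → x :: p = (List.range (p.length + 1)).map (fun i : ℕ => x + (i : ZMod n))) := by
  intro p
  induction p with
  | nil =>
    intro x _
    refine ⟨0, 0, rfl, by simp, by intro _; simp [List.range_succ]⟩
  | cons z q ih =>
    intro x hch
    replace hch := List.isChain_cons_cons.mp hch
    obtain ⟨hxz, hq⟩ := hch
    obtain ⟨a, b, hab, hlast, hstr⟩ := ih z hq
    rcases hxz with h1 | h2
    · refine ⟨a + 1, b, by simp only [List.length_cons]; omega, ?_, ?_⟩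
      · rw [List.getLast?_cons_cons, hlast, h1]
        congr 1
        push_cast
        ring
      · intro hb
        have hzq := hstr hb
        simp only [List.length_cons]
        rw [map_range_succ_eq]
        have he : (fun i : ℕ => x + ((i+1 : ℕ) : ZMod n)) = (fun i : ℕ => z + (i : ZMod n)) := by
          funext i; rw [h1]; push_cast; ring
        rw [Nat.cast_zero, add_zero, he, ← hzq]
    · refine ⟨a, b + 1, by simp only [List.length_cons]; omega, ?_, ?_⟩
      · rw [List.getLast?_cons_cons, hlast]
        congr 1
        have hz : z = x - 1 := by rw [h2]; ring
        rw [hz]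
        push_cast
        ring
      · intro hb; exact absurd hb (by simp)

private lemma key_inj (hn4 : 4 ≤ n) (z : ZMod n) {i j : ℕ} (hij : i < j) (hjn : j < n)
    (h2 : 2*(j - i) + 1 < n) :
    (z + (i : ZMod n)).val % ((n+1)/2) ≠ (z + (j : ZMod n)).val % ((n+1)/2) := by
  haveI : NeZero n := ⟨by omega⟩
  intro h
  set K := (n+1)/2 with hK
  set w := z.val with hw
  have hwlt : w < n := ZMod.val_lt z
  have hvi : (z + (i : ZMod n)).val = (w + i) % n := by
    rw [ZMod.val_add, ZMod.val_natCast, Nat.mod_eq_of_lt (hij.trans hjn)]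
  have hvj : (z + (j : ZMod n)).val = (w + j) % n := by
    rw [ZMod.val_add, ZMod.val_natCast, Nat.mod_eq_of_lt hjn]
  rw [hvi, hvj] at h
  have hvi2 : (w + i) % n = w + i ∨ (w + i) % n + n = w + i := by
    rcases lt_or_ge (w + i) n with h' | h'
    · exact Or.inl (Nat.mod_eq_of_lt h')
    · right
      rw [Nat.mod_eq_sub_mod h', Nat.mod_eq_of_lt (by omega)]
      omega
  have hvj2 : (w + j) % n = w + j ∨ (w + j) % n + n = w + j := by
    rcases lt_or_ge (w + j) n with h' | h'
    · exact Or.inl (Nat.mod_eq_of_lt h')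
    · right
      rw [Nat.mod_eq_sub_mod h', Nat.mod_eq_of_lt (by omega)]
      omega
  obtain ⟨c, hc⟩ := Nat.ModEq.dvd (h : (w+i) % n ≡ (w+j) % n [MOD K])
  have hKpos : (0:ℤ) < (K:ℤ) := by exact_mod_cast (show 0 < K by omega)
  have hb1 : ((((w+j) % n : ℕ)) : ℤ) < (n:ℤ) := Int.ofNat_lt.mpr (Nat.mod_lt _ (show 0 < n by omega))
  have hb2 : ((((w+i) % n : ℕ)) : ℤ) < (n:ℤ) := Int.ofNat_lt.mpr (Nat.mod_lt _ (show 0 < n by omega))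
  have hb3 : (0:ℤ) ≤ ((((w+i) % n : ℕ)) : ℤ) := Int.natCast_nonneg _
  have hb4 : (0:ℤ) ≤ ((((w+j) % n : ℕ)) : ℤ) := Int.natCast_nonneg _
  have hn2K : n ≤ 2*K ∧ 2*K ≤ n+1 := by omega
  have hc2 : c = -1 ∨ c = 0 ∨ c = 1 := by
    have hnk : (n:ℤ) ≤ 2*(K:ℤ) := by exact_mod_cast hn2K.1
    have hl1 : (K:ℤ)*c < (K:ℤ)*2 := by rw [← hc]; linarith
    have hl2 : (K:ℤ)*(-2) < (K:ℤ)*c := by rw [← hc]; linarith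
    have := (mul_lt_mul_iff_right₀ hKpos).mp hl1
    have := (mul_lt_mul_iff_right₀ hKpos).mp hl2
    omega
  rcases hc2 with h' | h' | h'
  · rw [h', mul_neg_one] at hc; omega
  · rw [h', mul_zero] at hc; omega
  · rw [h', mul_one] at hc; omega

private lemma key_inj' (hn4 : 4 ≤ n) (z : ZMod n) {i j : ℕ} (hij : i < j) (hjn : j < n)
    (h2 : 2*(j - i) + 1 < n) :
    (z - (i : ZMod n)).val % ((n+1)/2) ≠ (z - (j : ZMod n)).val % ((n+1)/2) := by
  have h := key_inj hn4 (z - (j:ZMod n)) (show 0 < j - i by omega)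
    (show j - i < n by omega) (show 2*((j-i) - 0) + 1 < n by omega)
  intro hh
  apply h
  rw [Nat.cast_zero, add_zero, Nat.cast_sub (le_of_lt hij)]
  rw [show z - (j:ZMod n) + ((j:ZMod n) - (i:ZMod n)) = z - (i:ZMod n) by ring]
  exact hh.symm

private lemma forward_path (x : ZMod n) (l : ℕ) :
    IsPathFrom (cycleBior n) x (x + (l : ZMod n))
      ((List.range (l+1)).map (fun i : ℕ => x + (i : ZMod n))) := by
  refine ⟨?_, ?_, ?_⟩
  · show List.IsChain _ _; rw [List.isChain_map]
    refine (List.isChain_range_succ _ l).mpr ?_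
    intro i _
    left
    push_cast
    ring
  · rw [map_range_succ_eq]
    simp
  · rw [List.range_succ, List.map_append]
    simp

private lemma backward_path (x : ZMod n) (l : ℕ) :
    IsPathFrom (cycleBior n) x (x - (l : ZMod n))
      ((List.range (l+1)).map (fun i : ℕ => x - (i : ZMod n))) := by
  refine ⟨?_, ?_, ?_⟩
  · show List.IsChain _ _; rw [List.isChain_map]
    refine (List.isChain_range_succ _ l).mpr ?_
    intro i _
    right
    push_cast
    ring
  · rw [map_range_succ_eq]
    simp
  · rw [List.range_succ, List.map_append]
    simp

private lemma min_le_path_len (hn4 : 4 ≤ n) {x y : ZMod n} {p : List (ZMod n)}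
    (hp : IsPathFrom (cycleBior n) x y p) :
    min (y - x).val (n - (y - x).val) + 1 ≤ p.length := by
  haveI : NeZero n := ⟨by omega⟩
  obtain ⟨hch, hh, hl⟩ := hp
  cases p with
  | nil => simp at hh
  | cons u q =>
    have hux : u = x := by simpa using hh
    subst hux
    obtain ⟨a, b, hab, hlast, -⟩ := chain_struct q u (hch : List.Chain (cycleBior n) u q)
    rw [hl] at hlast
    have hy : y = u + (a : ZMod n) - (b : ZMod n) := Option.some.inj hlast
    set d := (y - u).val with hd
    have hdlt : d < n := ZMod.val_lt _
    have hdn : ((d:ℕ) : ZMod n) = y - u := ZMod.natCast_zmod_val _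
    have hz0 : (((a:ℤ) - b - d : ℤ) : ZMod n) = 0 := by
      push_cast
      rw [hdn, hy]
      ring
    rw [ZMod.intCast_zmod_eq_zero_iff_dvd] at hz0
    have h0 : ((a:ℤ) - b - d = 0) ∨ ((n:ℤ) ≤ (a:ℤ) - b - d) ∨ ((a:ℤ) - b - d ≤ -(n:ℤ)) := by
      rcases eq_or_ne ((a:ℤ) - b - d) 0 with h' | h'
      · exact Or.inl h'
      · have hle : (n:ℤ) ≤ |(a:ℤ) - b - d| :=
          Int.le_of_dvd (abs_pos.mpr h') ((dvd_abs _ _).mpr hz0)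
        rcases abs_cases ((a:ℤ) - b - d) with ⟨he, -⟩ | ⟨he, -⟩ <;> omega
    simp only [List.length_cons]
    omega

private lemma dist_eq (hn4 : 4 ≤ n) (x y : ZMod n) :
    dist (cycleBior n) x y = min (y - x).val (n - (y - x).val) := by
  haveI : NeZero n := ⟨by omega⟩
  set d := (y - x).val with hd
  have hdlt : d < n := ZMod.val_lt _
  have hdn : ((d:ℕ) : ZMod n) = y - x := ZMod.natCast_zmod_val _
  have hfwd : (d : ℕ) ∈ {m | ∃ p, IsPathFrom (cycleBior n) x y p ∧ p.length = m + 1} := by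
    refine ⟨(List.range (d+1)).map (fun i : ℕ => x + (i : ZMod n)), ?_, by simp⟩
    have hp := forward_path x d
    rwa [show x + (d : ZMod n) = y by rw [hdn]; ring] at hp
  have hbwd : (n - d : ℕ) ∈ {m | ∃ p, IsPathFrom (cycleBior n) x y p ∧ p.length = m + 1} := by
    refine ⟨(List.range ((n-d)+1)).map (fun i : ℕ => x - (i : ZMod n)), ?_, by simp⟩
    have hp := backward_path x (n - d)
    rwa [show x - ((n - d : ℕ) : ZMod n) = y by
      rw [Nat.cast_sub (le_of_lt hdlt), ZMod.natCast_self, hdn]; ring] at hp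
  apply le_antisymm
  · rcases le_total d (n - d) with h | h
    · rw [min_eq_left h]; exact Nat.sInf_le hfwd
    · rw [min_eq_right h]; exact Nat.sInf_le hbwd
  · apply le_csInf ⟨d, hfwd⟩
    rintro m ⟨p, hp, hlen⟩
    have := min_le_path_len hn4 hp
    omega

private noncomputable def gco (hn4 : 4 ≤ n) (z : ZMod n) : Fin ((n+1)/2) :=
  ⟨z.val % ((n+1)/2), Nat.mod_lt _ (by omega)⟩

private noncomputable def cycCol (hn4 : 4 ≤ n) : ZMod n → ZMod n → Fin ((n+1)/2) :=
  fun u v => if v = u + 1 then gco hn4 u else gco hn4 v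

private lemma two_ne_zero' (hn4 : 4 ≤ n) : (2 : ZMod n) ≠ 0 := by
  haveI : NeZero n := ⟨by omega⟩
  intro h
  have h2 : ((2:ℕ) : ZMod n) = 0 := by exact_mod_cast h
  have h3 : ((2:ℕ) : ZMod n).val = 0 := by rw [h2, ZMod.val_zero]
  rw [ZMod.val_natCast, Nat.mod_eq_of_lt (by omega)] at h3
  omega

private lemma upper (hn4 : 4 ≤ n) :
    ∃ c : ZMod n → ZMod n → Fin ((n+1)/2), IsStrongRainbowConnected (cycleBior n) c := by
  haveI : NeZero n := ⟨by omega⟩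
  refine ⟨cycCol hn4, ?_⟩
  intro x y hxy
  set d := (y - x).val with hd
  have hdlt : d < n := ZMod.val_lt _
  have hdn : ((d:ℕ) : ZMod n) = y - x := ZMod.natCast_zmod_val _
  have hd1 : 1 ≤ d := by
    rcases Nat.eq_zero_or_pos d with h | h
    · exfalso
      apply hxy
      have h0 : y - x = 0 := by rw [← hdn, h, Nat.cast_zero]
      exact (sub_eq_zero.mp h0).symm
    · exact h
  have hdist := dist_eq hn4 x y
  rcases le_or_gt d (n - d) with hcase | hcase
  · refine ⟨(List.range (d+1)).map (fun i : ℕ => x + (i : ZMod n)), ?_, ?_, ?_⟩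
    · have hp := forward_path x d
      rwa [show x + (d : ZMod n) = y by rw [hdn]; ring] at hp
    · unfold RainbowPath
      rw [colors_map_range]
      have hfun : (fun i : ℕ => cycCol hn4 (x + (i:ZMod n)) (x + ((i+1:ℕ):ZMod n)))
          = fun i : ℕ => gco hn4 (x + (i:ZMod n)) := by
        funext i
        unfold cycCol
        rw [if_pos (show x + ((i+1:ℕ):ZMod n) = x + (i:ZMod n) + 1 by push_cast; ring)]
      rw [hfun]
      apply List.Nodup.map_on ?_ List.nodup_range
      intro i hi j hj hf
      simp only [List.mem_range] at hi hj
      rcases Nat.lt_trichotomy i j with h' | h' | h'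
      · exact absurd (congrArg Fin.val hf) (key_inj hn4 x h' (by omega) (by omega))
      · exact h'
      · exact absurd (congrArg Fin.val hf).symm (key_inj hn4 x h' (by omega) (by omega))
    · rw [List.length_map, List.length_range, hdist, min_eq_left hcase]
  · refine ⟨(List.range ((n-d)+1)).map (fun i : ℕ => x - (i : ZMod n)), ?_, ?_, ?_⟩
    · have hp := backward_path x (n - d)
      rwa [show x - ((n - d : ℕ) : ZMod n) = y by
        rw [Nat.cast_sub (le_of_lt hdlt), ZMod.natCast_self, hdn]; ring] at hp
    · unfold RainbowPath
      rw [colors_map_range]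
      have hfun : (fun i : ℕ => cycCol hn4 (x - (i:ZMod n)) (x - ((i+1:ℕ):ZMod n)))
          = fun i : ℕ => gco hn4 (x - ((i+1:ℕ):ZMod n)) := by
        funext i
        unfold cycCol
        rw [if_neg]
        intro hcond
        apply two_ne_zero' hn4
        push_cast at hcond ⊢
        linear_combination -hcond
      rw [hfun]
      apply List.Nodup.map_on ?_ List.nodup_range
      intro i hi j hj hf
      simp only [List.mem_range] at hi hj
      rcases Nat.lt_trichotomy i j with h' | h' | h'
      · exact absurd (congrArg Fin.val hf)
          (key_inj' hn4 x (show i+1 < j+1 by omega) (by omega) (by omega))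
      · exact h'
      · exact absurd (congrArg Fin.val hf).symm
          (key_inj' hn4 x (show j+1 < i+1 by omega) (by omega) (by omega))
    · rw [List.length_map, List.length_range, hdist, min_eq_right (le_of_lt hcase)]

private lemma lower (hn4 : 4 ≤ n) (k : ℕ) (c : ZMod n → ZMod n → Fin k)
    (hc : IsRainbowConnected (cycleBior n) c) : (n+1)/2 ≤ k := by
  haveI : NeZero n := ⟨by omega⟩
  set m := n / 2 with hm
  have hmne : ∀ x : ZMod n, x ≠ x + ((m:ℕ) : ZMod n) := by
    intro x h
    have h0 : ((m:ℕ) : ZMod n) = 0 := by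
      have h1 := congrArg (fun t => t - x) h
      simpa using h1.symm
    have h2 : (m : ℕ) % n = 0 := by rw [← ZMod.val_natCast, h0, ZMod.val_zero]
    rw [Nat.mod_eq_of_lt (by omega)] at h2
    omega
  -- generic analysis of a rainbow path from x to x + m
  have key : ∀ x : ZMod n, ∃ q : List (ZMod n), List.Chain (cycleBior n) x q ∧
      RainbowPath c (x :: q) ∧ m ≤ q.length ∧ q.length ≤ k ∧
      ∃ a b : ℕ, a + b = q.length ∧ x + (m:ZMod n) = x + (a:ZMod n) - (b:ZMod n) ∧
        (b = 0 → x :: q = (List.range (q.length + 1)).map (fun i : ℕ => x + (i : ZMod n))) := by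
    intro x
    obtain ⟨p, hp, hrb⟩ := hc x (x + (m:ZMod n)) (hmne x)
    obtain ⟨hch, hh, hl⟩ := hp
    cases p with
    | nil => simp at hh
    | cons u q =>
      have hux : u = x := by simpa using hh
      subst hux
      obtain ⟨a, b, hab, hlast, hstr⟩ := chain_struct q u (hch : List.Chain (cycleBior n) u q)
      rw [hl] at hlast
      have hy : u + (m:ZMod n) = u + (a:ZMod n) - (b:ZMod n) := Option.some.inj hlast
      refine ⟨q, hch, hrb, ?_, ?_, a, b, hab, hy, hstr⟩
      · have hdval : ((u + (m:ZMod n)) - u).val = m := by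
          rw [show u + (m:ZMod n) - u = ((m:ℕ):ZMod n) by ring, ZMod.val_natCast,
            Nat.mod_eq_of_lt (by omega)]
        have hmin := min_le_path_len hn4 (⟨hch, by simp, hl⟩ :
          IsPathFrom (cycleBior n) u (u + (m:ZMod n)) (u :: q))
        rw [hdval] at hmin
        simp only [List.length_cons] at hmin
        omega
      · have hlen : (((u::q).zip (u::q).tail).map (fun e => c e.1 e.2)).length = q.length := by
          simp
        have hnd : (((u::q).zip (u::q).tail).map (fun e => c e.1 e.2)).Nodup := hrb
        have := hnd.length_le_card
        simp only [Fintype.card_fin] at this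
        omega
  -- step 1 : m ≤ k
  have hmk : m ≤ k := by
    obtain ⟨q, -, -, h1, h2, -⟩ := key 0
    omega
  by_contra hk
  push_neg at hk
  have hodd : n = 2*m + 1 := by omega
  have hkm : k = m := by omega
  subst hkm
  -- window property
  have H : ∀ (x : ZMod n) (i j : ℕ), i < j → j < m →
      c (x + (i:ZMod n)) (x + (i:ZMod n) + 1) ≠ c (x + (j:ZMod n)) (x + (j:ZMod n) + 1) := by
    intro x i j hij hjm
    obtain ⟨q, hch, hrb, hmL, hLk, a, b, hab, hy, hstr⟩ := key x
    have hz0 : (((a:ℤ) - b - m : ℤ) : ZMod n) = 0 := by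
      push_cast
      linear_combination -hy
    rw [ZMod.intCast_zmod_eq_zero_iff_dvd] at hz0
    have hb0 : b = 0 ∧ a = m := by
      rcases eq_or_ne ((a:ℤ) - b - m) 0 with h' | h'
      · constructor <;> omega
      · exfalso
        have hle := Int.le_of_dvd (abs_pos.mpr h') ((dvd_abs _ _).mpr hz0)
        rcases abs_cases ((a:ℤ) - b - m) with ⟨he, -⟩ | ⟨he, -⟩ <;> omega
    obtain ⟨hb, ha⟩ := hb0
    have hq := hstr hb
    have hLm : q.length = m := by omega
    have hnd : (((x::q).zip (x::q).tail).map (fun e => c e.1 e.2)).Nodup := hrb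
    rw [hq, colors_map_range, hLm] at hnd
    have hinj := (List.nodup_map_iff_inj_on (List.nodup_range (n := m))).mp hnd
    intro heq
    have heq' : c (x + (i:ZMod n)) (x + ((i+1:ℕ):ZMod n))
        = c (x + (j:ZMod n)) (x + ((j+1:ℕ):ZMod n)) := by
      rw [show x + ((i+1:ℕ):ZMod n) = x + (i:ZMod n) + 1 by push_cast; ring,
        show x + ((j+1:ℕ):ZMod n) = x + (j:ZMod n) + 1 by push_cast; ring]
      exact heq
    have := hinj i (List.mem_range.mpr (by omega)) j (List.mem_range.mpr hjm) heq'
    omega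
  have m2 : 2 ≤ m := by omega
  set f : ZMod n → Fin m := fun z => c z (z + 1) with hf
  have H' : ∀ (x : ZMod n) (i j : ℕ), i < j → j < m →
      f (x + (i:ZMod n)) ≠ f (x + (j:ZMod n)) := by
    intro x i j hij hjm
    exact H x i j hij hjm
  have per : ∀ x : ZMod n, f (x + ((m:ℕ):ZMod n)) = f x := by
    intro x
    have hinj : Function.Injective (fun t : Fin m => f (x + 1 + ((t:ℕ):ZMod n))) := by
      intro t s hts
      by_contra hne
      rcases Nat.lt_trichotomy (t:ℕ) (s:ℕ) with h' | h' | h'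
      · exact H' (x+1) _ _ h' s.isLt hts
      · exact hne (Fin.ext h')
      · exact H' (x+1) _ _ h' t.isLt hts.symm
    have hsurj : Function.Surjective (fun t : Fin m => f (x + 1 + ((t:ℕ):ZMod n))) :=
      ((Fintype.bijective_iff_injective_and_card _).mpr ⟨hinj, by simp⟩).2
    obtain ⟨t, ht⟩ := hsurj (f x)
    simp only at ht
    have htm : (t:ℕ) = m - 1 := by
      by_contra h'
      have h1 : (t:ℕ) + 1 < m := by have := t.isLt; omega
      apply H' x 0 ((t:ℕ)+1) (by omega) h1
      rw [Nat.cast_zero, add_zero,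
        show x + (((t:ℕ)+1 : ℕ):ZMod n) = x + 1 + ((t:ℕ):ZMod n) by push_cast; ring]
      exact ht.symm
    have hrw : x + 1 + ((t:ℕ):ZMod n) = x + ((m:ℕ):ZMod n) := by
      rw [htm, show ((m:ℕ):ZMod n) = (((m-1)+1 : ℕ):ZMod n) by congr 1; omega]
      push_cast
      ring
    rw [hrw] at ht
    exact ht
  have shift : ∀ x : ZMod n, f x = f (x + 1) := by
    intro x
    have h1 := per (x + 1)
    have h2 := per (x + 1 + ((m:ℕ):ZMod n))
    have h3 : x + 1 + ((m:ℕ):ZMod n) + ((m:ℕ):ZMod n) = x := by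
      have hzero : ((2*m+1 : ℕ) : ZMod n) = 0 := by
        rw [← hodd]; exact ZMod.natCast_self n
      have : x + 1 + ((m:ℕ):ZMod n) + ((m:ℕ):ZMod n) = x + ((2*m+1 : ℕ) : ZMod n) := by
        push_cast
        ring
      rw [this, hzero, add_zero]
    rw [h3] at h2
    exact h2.trans h1
  have hcontra := H' 0 0 1 (by omega) (by omega)
  apply hcontra
  rw [Nat.cast_zero, Nat.cast_one, add_zero]
  exact shift 0

end Proof8

/-- For every `n ≥ 4`, `rc*(bior C_n) = src*(bior C_n) = ⌈n/2⌉`. -/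
theorem stmt8 (n : ℕ) (hn : 4 ≤ n) :
    rcStar (cycleBior n) = (n + 1) / 2 ∧ srcStar (cycleBior n) = (n + 1) / 2 := by
  obtain ⟨c, hcstrong⟩ := upper hn
  have hrc : IsRainbowConnected (cycleBior n) c := by
    intro x y hxy
    obtain ⟨p, hp, hrb, -⟩ := hcstrong x y hxy
    exact ⟨p, hp, hrb⟩
  have hmem_src : (n+1)/2 ∈ {k | ∃ c : ZMod n → ZMod n → Fin k,
      IsStrongRainbowConnected (cycleBior n) c} := ⟨c, hcstrong⟩
  have hmem_rc : (n+1)/2 ∈ {k | ∃ c : ZMod n → ZMod n → Fin k,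
      IsRainbowConnected (cycleBior n) c} := ⟨c, hrc⟩
  constructor
  · apply le_antisymm (Nat.sInf_le hmem_rc)
    apply le_csInf ⟨_, hmem_rc⟩
    rintro k ⟨c', hc'⟩
    exact lower hn k c' hc'
  · apply le_antisymm (Nat.sInf_le hmem_src)
    apply le_csInf ⟨_, hmem_src⟩
    rintro k ⟨c', hc'⟩
    refine lower hn k c' ?_
    intro x y hxy
    obtain ⟨p, hp, hrb, -⟩ := hc' x y hxy
    exact ⟨p, hp, hrb⟩

end RainbowDigraph
end

section
/- For odd n = 2k+1 with k ≥ 2, every arc-coloring of the biorientation of C_n with k colors fails to be rainbow connected; that is, rc*(bior(C_{2k+1})) ≥ k+1. -/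
open scoped Classical

namespace RainbowDigraph

variable {V : Type}

lemma walk_decomp (n : ℕ) (p : List (ZMod n)) : ∀ (x y : ZMod n),
    List.Chain' (cycleBior n) p → p.head? = some x → p.getLast? = some y →
    ∃ a b : ℕ, a + b + 1 = p.length ∧ y = x + (a : ZMod n) - (b : ZMod n) ∧
      (b = 0 → p = (List.range p.length).map (fun i : ℕ => x + (i : ZMod n))) := by
  induction p with
  | nil => intro x y _ hh _; simp at hh
  | cons hd tl ih =>
    intro x y hc hh hl
    simp only [List.head?_cons, Option.some.injEq] at hh
    subst hh
    cases tl with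
    | nil =>
      refine ⟨0, 0, by simp, ?_, ?_⟩
      · simp only [List.getLast?_singleton, Option.some.injEq] at hl
        simp [← hl]
      · intro _; simp [List.range_succ]
    | cons z rest =>
      unfold List.Chain' at hc; rw [List.isChain_cons_cons] at hc
      rw [List.getLast?_cons_cons] at hl
      obtain ⟨a, b, hab, hy, hfwd⟩ := ih z y hc.2 rfl hl
      rcases hc.1 with h1 | h1
      · refine ⟨a + 1, b, by simp only [List.length_cons] at hab ⊢; omega, ?_, ?_⟩
        · rw [hy, h1]; push_cast; ring
        · intro hb
          have hrw := hfwd hb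
          simp only [List.length_cons] at hrw ⊢
          rw [List.range_succ_eq_map, List.map_cons, List.map_map]
          refine List.cons_eq_cons.mpr ⟨by simp, ?_⟩
          rw [hrw]
          apply List.map_congr_left
          intro i _
          simp only [Function.comp_apply, h1]
          push_cast; ring
      · refine ⟨a, b + 1, by simp only [List.length_cons] at hab ⊢; omega, ?_,
          by omega⟩
        rw [hy, h1]; push_cast; ring

lemma colors_of_map {α β : Type} (g : ℕ → α) (c : α → α → β) (m : ℕ) :
    ((((List.range (m+1)).map g).zip ((List.range (m+1)).map g).tail).map
        (fun e => c e.1 e.2))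
      = (List.range m).map (fun i => c (g i) (g (i+1))) := by
  have h1 : ((List.range (m+1)).map g).tail = (List.range m).map (g ∘ Nat.succ) := by
    rw [List.range_succ_eq_map]; simp [List.map_map]
  have h2 : (List.range (m+1)).map g = (List.range m).map g ++ [g m] := by
    rw [List.range_succ]; simp
  have h3 : ((List.range m).map g ++ [g m]).zip ((List.range m).map (g ∘ Nat.succ))
      = ((List.range m).map g).zip ((List.range m).map (g ∘ Nat.succ)) := by
    conv_lhs => rw [show (List.range m).map (g ∘ Nat.succ)
      = (List.range m).map (g ∘ Nat.succ) ++ ([] : List α) by simp]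
    rw [List.zip_append (by simp)]; simp
  rw [h1, h2, h3, List.zip_map']
  simp only [List.map_map]
  rfl

lemma forward_chain (n : ℕ) (x : ZMod n) (m : ℕ) :
    List.Chain' (cycleBior n) ((List.range (m+1)).map (fun i : ℕ => x + (i : ZMod n))) := by
  unfold List.Chain'; rw [List.isChain_map, show m + 1 = Nat.succ m from rfl, List.isChain_range_succ]
  intro i _
  left; push_cast; ring

lemma window_inj (k : ℕ) (hk : 2 ≤ k)
    (c : ZMod (2*k+1) → ZMod (2*k+1) → Fin k)
    (hrc : IsRainbowConnected (cycleBior (2*k+1)) c) :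
    ∀ x : ZMod (2*k+1), ∀ i j : ℕ, i < k → j < k →
      c (x + (i:ZMod (2*k+1))) (x + (i:ZMod (2*k+1)) + 1)
        = c (x + (j:ZMod (2*k+1))) (x + (j:ZMod (2*k+1)) + 1) → i = j := by
  intro x i j hi hj hcc
  have hne : x ≠ x + ((k : ℕ) : ZMod (2*k+1)) := by
    intro h
    have h0 : ((k : ℕ) : ZMod (2*k+1)) = 0 := by
      have := congrArg (· - x) h; simpa using this.symm
    rw [ZMod.natCast_eq_zero_iff] at h0
    have := Nat.le_of_dvd (by omega) h0
    omega
  obtain ⟨p, ⟨hcn, hh, hl⟩, hr⟩ := hrc x (x + (k : ℕ)) hne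
  obtain ⟨a, b, hab, hy, hfwd⟩ := walk_decomp (2*k+1) p x (x + (k : ℕ)) hcn hh hl
  -- length bound from rainbow
  have hlen : p.length - 1 ≤ k := by
    have h1 := List.Nodup.length_le_card hr
    simp only [List.length_map, List.length_zip, List.length_tail,
      Fintype.card_fin] at h1
    omega
  -- displacement forces a = k, b = 0
  have hkb : k + b = a := by
    have h2 : ((k + b : ℕ) : ZMod (2*k+1)) = ((a : ℕ) : ZMod (2*k+1)) := by
      push_cast
      linear_combination hy
    have h3 := congrArg ZMod.val h2
    rw [ZMod.val_natCast_of_lt (by omega), ZMod.val_natCast_of_lt (by omega)] at h3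
    exact h3
  have hb0 : b = 0 := by omega
  have hak : a = k := by omega
  have hplen : p.length = k + 1 := by omega
  have hp := hfwd hb0
  rw [hplen] at hp
  rw [RainbowPath, hp, colors_of_map] at hr
  have hinj := (List.nodup_map_iff_inj_on (List.nodup_range (n := k))).mp hr
  have := hinj i (List.mem_range.mpr hi) j (List.mem_range.mpr hj) ?_
  · exact this
  · show c (x + (i:ZMod _)) (x + ((i+1:ℕ):ZMod _)) = c (x + (j:ZMod _)) (x + ((j+1:ℕ):ZMod _))
    have e1 : x + ((i+1:ℕ):ZMod (2*k+1)) = x + (i:ZMod (2*k+1)) + 1 := by push_cast; ring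
    have e2 : x + ((j+1:ℕ):ZMod (2*k+1)) = x + (j:ZMod (2*k+1)) + 1 := by push_cast; ring
    rw [e1, e2]; exact hcc

lemma no_rc (k : ℕ) (hk : 2 ≤ k) (c : ZMod (2*k+1) → ZMod (2*k+1) → Fin k) :
    ¬ IsRainbowConnected (cycleBior (2*k+1)) c := by
  intro hrc
  have key := window_inj k hk c hrc
  set e : ZMod (2*k+1) → Fin k := fun y => c y (y+1) with he
  have ekey : ∀ x : ZMod (2*k+1), ∀ i j : ℕ, i < k → j < k →
      e (x + (i:ZMod (2*k+1))) = e (x + (j:ZMod (2*k+1))) → i = j := by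
    intro x i j hi hj hcc
    exact key x i j hi hj hcc
  have per : ∀ x : ZMod (2*k+1), e x = e (x + ((k:ℕ) : ZMod (2*k+1))) := by
    intro x
    set W : Fin k → Fin k := fun i => e (x + 1 + ((i : ℕ) : ZMod (2*k+1))) with hW
    have Winj : Function.Injective W := by
      intro i j hij
      exact Fin.ext (ekey (x+1) i j i.isLt j.isLt hij)
    obtain ⟨j, hj⟩ := Finite.injective_iff_surjective.mp Winj (e x)
    have hx1j : x + 1 + ((j:ℕ) : ZMod (2*k+1)) = x + (((j:ℕ)+1 : ℕ) : ZMod (2*k+1)) := by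
      push_cast; ring
    by_cases hj1 : (j:ℕ) + 1 < k
    · exfalso
      have h5 : e (x + ((0:ℕ) : ZMod (2*k+1))) = e (x + (((j:ℕ)+1 : ℕ) : ZMod (2*k+1))) := by
        rw [← hx1j]
        simpa using hj.symm
      have := ekey x 0 ((j:ℕ)+1) (by omega) hj1 h5
      omega
    · have hjk : (j:ℕ) + 1 = k := by have := j.isLt; omega
      rw [← hj, hW]
      simp only
      rw [hx1j, hjk]
  have const : ∀ x : ZMod (2*k+1), e (x + 1) = e x := by
    intro x
    have h1 := per (x+1)
    have h2 := per (x + 1 + ((k:ℕ) : ZMod (2*k+1)))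
    have h3 : x + 1 + ((k:ℕ) : ZMod (2*k+1)) + ((k:ℕ) : ZMod (2*k+1)) = x := by
      have hz : ((2*k+1 : ℕ) : ZMod (2*k+1)) = 0 := ZMod.natCast_self _
      push_cast at hz ⊢
      linear_combination hz
    rw [h3] at h2
    rw [h1, h2]
  have h6 : e ((0 : ZMod (2*k+1)) + ((0:ℕ):ZMod (2*k+1))) = e ((0 : ZMod (2*k+1)) + ((1:ℕ):ZMod (2*k+1))) := by
    have := const (0 : ZMod (2*k+1))
    simpa using this.symm
  have := ekey 0 0 1 (by omega) (by omega) h6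
  omega

lemma exists_rc (k : ℕ) :
    ∃ c : ZMod (2*k+1) → ZMod (2*k+1) → Fin (2*k+1),
      IsRainbowConnected (cycleBior (2*k+1)) c := by
  set c0 : ZMod (2*k+1) → ZMod (2*k+1) → Fin (2*k+1) :=
    fun i j => ⟨(if j = i + 1 then i else j).val, ZMod.val_lt _⟩ with hc0
  refine ⟨c0, ?_⟩
  intro x y hxy
  set d := (y - x).val with hd
  have hdn : d < 2*k+1 := ZMod.val_lt _
  have hcast : ((d : ℕ) : ZMod (2*k+1)) = y - x := by
    rw [hd, ZMod.natCast_val, ZMod.cast_id]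
  set f : ℕ → ZMod (2*k+1) := fun i => x + (i : ZMod (2*k+1)) with hf
  refine ⟨(List.range (d+1)).map f, ⟨forward_chain (2*k+1) x d, ?_, ?_⟩, ?_⟩
  · rw [List.range_succ_eq_map, List.map_cons, List.head?_cons]
    simp [hf]
  · rw [List.range_succ, List.map_append, List.map_singleton, List.getLast?_concat]
    simp only [hf, hcast, Option.some.injEq]
    ring
  · rw [RainbowPath, colors_of_map]
    have hstep : ∀ i : ℕ, f (i+1) = f i + 1 := by
      intro i; simp only [hf]; push_cast; ring
    have heq : ∀ i : ℕ, c0 (f i) (f (i+1)) = (⟨(f i).val, ZMod.val_lt _⟩ : Fin (2*k+1)) := by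
      intro i; simp [hc0, hstep i]
    rw [(List.map_congr_left (fun i _ => heq i))]
    rw [List.nodup_map_iff_inj_on (List.nodup_range (n := _))]
    intro i hi j hj hij
    rw [List.mem_range] at hi hj
    have h1 : (f i).val = (f j).val := congrArg Fin.val hij
    have h2 : f i = f j := ZMod.val_injective _ h1
    have h3 : ((i:ℕ) : ZMod (2*k+1)) = ((j:ℕ) : ZMod (2*k+1)) := by
      have := congrArg (· - x) h2; simpa [hf] using this
    have := congrArg ZMod.val h3
    rwa [ZMod.val_natCast_of_lt (by omega), ZMod.val_natCast_of_lt (by omega)] at this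

/-- For odd `n = 2k+1` with `k ≥ 2`, no arc-coloring of `bior C_n` with `k`
colors is rainbow connected; hence `rc*(bior C_{2k+1}) ≥ k + 1`. -/
theorem stmt9 (k : ℕ) (hk : 2 ≤ k) :
    (∀ c : ZMod (2 * k + 1) → ZMod (2 * k + 1) → Fin k,
      ¬ IsRainbowConnected (cycleBior (2 * k + 1)) c) ∧
    k + 1 ≤ rcStar (cycleBior (2 * k + 1)) := by
  refine ⟨fun c => no_rc k hk c, ?_⟩
  rw [rcStar]
  apply le_csInf
  · obtain ⟨c, hc⟩ := exists_rc k
    exact ⟨2*k+1, c, hc⟩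
  · rintro m ⟨c, hc⟩
    by_contra h
    push_neg at h
    have hm : m ≤ k := by omega
    apply no_rc k hk (fun x y => Fin.castLE hm (c x y))
    intro x y hxy
    obtain ⟨p, hp, hr⟩ := hc x y hxy
    refine ⟨p, hp, ?_⟩
    have hmm : ((p.zip p.tail).map (fun e => Fin.castLE hm (c e.1 e.2)))
        = ((p.zip p.tail).map (fun e => c e.1 e.2)).map (Fin.castLE hm) := by
      rw [List.map_map]; rfl
    rw [RainbowPath, hmm]
    exact hr.map (Fin.castLE_injective hm)

end RainbowDigraph
end

section
/- Let k ≥ 2 and let K be the complete k-partite digraph obtained as the biorientation of the complete multipartite graph K_{n_1,…,n_k}, where n_i ≥ 2 for at least one i. Then rc*(K) = src*(K) = 2. -/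
open scoped Classical

namespace RainbowDigraph

variable {V : Type}

lemma nodup_len {α : Type*} [Subsingleton α] {l : List α} (h : l.Nodup) : l.length ≤ 1 := by
  match l with
  | [] => simp
  | [a] => simp
  | a :: b :: t =>
    simp [List.nodup_cons] at h
    exact absurd (Subsingleton.elim a b) (by tauto)

lemma length_ge_three {D : V → V → Prop} {x y : V} (hxy : x ≠ y) (hnadj : ¬ D x y)
    {p : List V} (hp : IsPathFrom D x y p) : 3 ≤ p.length := by
  obtain ⟨hc, hh, hl⟩ := hp
  match p with
  | [] => simp at hh
  | [a] =>
    simp at hh hl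
    exact absurd (hh.symm.trans hl) hxy
  | [a, b] =>
    simp at hh hl hc
    subst hh; subst hl
    exact absurd (List.isChain_pair.mp hc) hnadj
  | a :: b :: c :: t => simp

lemma dist_eq_one {D : V → V → Prop} {x y : V} (hxy : x ≠ y) (h : D x y) :
    dist D x y = 1 := by
  have h1 : 1 ∈ {m | ∃ p, IsPathFrom D x y p ∧ p.length = m + 1} :=
    ⟨[x, y], ⟨List.isChain_pair.mpr h, rfl, rfl⟩, rfl⟩
  refine le_antisymm (Nat.sInf_le h1) ?_
  rcases Nat.eq_zero_or_pos (dist D x y) with h0 | h0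
  · rw [dist, Nat.sInf_eq_zero] at h0
    rcases h0 with h0 | h0
    · obtain ⟨p, hp, hlen⟩ := h0
      obtain ⟨a, rfl⟩ := List.length_eq_one_iff.mp hlen
      obtain ⟨_, hh, hl⟩ := hp
      simp at hh hl
      exact absurd (hh.symm.trans hl) hxy
    · exact absurd h1 (by simp [h0])
  · exact h0

lemma dist_eq_two {D : V → V → Prop} {x y z : V} (hxy : x ≠ y) (hnadj : ¬ D x y)
    (h1 : D x z) (h2 : D z y) : dist D x y = 2 := by
  have hm : 2 ∈ {m | ∃ p, IsPathFrom D x y p ∧ p.length = m + 1} :=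
    ⟨[x, z, y], ⟨List.isChain_cons_cons.mpr ⟨h1, List.isChain_pair.mpr h2⟩, rfl, rfl⟩, rfl⟩
  refine le_antisymm (Nat.sInf_le hm) ?_
  obtain ⟨p, hp, hlen⟩ := Nat.sInf_mem (⟨2, hm⟩ : Set.Nonempty _)
  have h3 := length_ge_three hxy hnadj hp
  unfold dist
  omega

/-- For the complete `k`-partite biorientation (`k ≥ 2`, all parts nonempty,
some part of size at least `2`), `rc* = src* = 2`. -/
theorem stmt10 (k : ℕ) (hk : 2 ≤ k) (n : Fin k → ℕ)
    (h1 : ∀ i, 1 ≤ n i) (h2 : ∃ i, 2 ≤ n i) :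
    rcStar (fun x y : (i : Fin k) × Fin (n i) => x.1 ≠ y.1) = 2 ∧
    srcStar (fun x y : (i : Fin k) × Fin (n i) => x.1 ≠ y.1) = 2 := by
  set D : ((i : Fin k) × Fin (n i)) → ((i : Fin k) × Fin (n i)) → Prop :=
    fun x y => x.1 ≠ y.1 with hD
  -- the 2-coloring
  set c : ((i : Fin k) × Fin (n i)) → ((i : Fin k) × Fin (n i)) → Fin 2 :=
    fun u v => if (u.1 : ℕ) < (v.1 : ℕ) then 0 else 1 with hc
  -- c is strong rainbow connected
  have hstrong : IsStrongRainbowConnected D c := by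
    intro x y hxy
    by_cases hadj : x.1 = y.1
    · -- same part: go via a vertex in another part
      set j : Fin k := if (x.1 : ℕ) = 0 then ⟨1, by omega⟩ else ⟨0, by omega⟩ with hj
      have hjx : (j : ℕ) ≠ (x.1 : ℕ) := by
        rw [hj]; split_ifs with h <;> simp <;> omega
      set z : (i : Fin k) × Fin (n i) := ⟨j, ⟨0, h1 j⟩⟩ with hz
      have hxz : D x z := by
        simp only [hD, hz]
        exact fun h => hjx (by rw [h])
      have hzy : D z y := by
        simp only [hD, hz]
        intro h
        exact hjx (by rw [h, ← hadj])
      have hnadj : ¬ D x y := by simp [hD, hadj]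
      have hdist : dist D x y = 2 := dist_eq_two hxy hnadj hxz hzy
      refine ⟨[x, z, y], ⟨List.isChain_cons_cons.mpr ⟨hxz, List.isChain_pair.mpr hzy⟩, rfl, rfl⟩, ?_, by rw [hdist]; rfl⟩
      simp only [RainbowPath, List.zip, List.tail]
      have hne : c x z ≠ c z y := by
        simp only [hc, hz]
        have hyx : (y.1 : ℕ) = (x.1 : ℕ) := by rw [hadj]
        rcases lt_or_gt_of_ne hjx with h | h
        · rw [if_neg (by omega), if_pos (by omega)]; decide
        · rw [if_pos (by omega), if_neg (by omega)]; decide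
      simp [hne]
    · -- different parts: arc
      have hdxy : D x y := hadj
      have hdist : dist D x y = 1 := dist_eq_one hxy hdxy
      exact ⟨[x, y], ⟨List.isChain_pair.mpr hdxy, rfl, rfl⟩, by simp [RainbowPath], by rw [hdist]; rfl⟩
  have hrcconn : IsRainbowConnected D c := fun x y hxy =>
    let ⟨p, hp, hr, _⟩ := hstrong x y hxy
    ⟨p, hp, hr⟩
  -- lower bound: any rainbow connected coloring needs ≥ 2 colors
  have hlow : ∀ (m : ℕ) (c' : ((i : Fin k) × Fin (n i)) → ((i : Fin k) × Fin (n i)) → Fin m),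
      IsRainbowConnected D c' → 2 ≤ m := by
    intro m c' hrc
    obtain ⟨i0, hi0⟩ := h2
    set x : (i : Fin k) × Fin (n i) := ⟨i0, ⟨0, by omega⟩⟩ with hx
    set y : (i : Fin k) × Fin (n i) := ⟨i0, ⟨1, by omega⟩⟩ with hy
    have hxy : x ≠ y := by
      intro h
      simpa using congrArg (fun s : (i : Fin k) × Fin (n i) => (s.2 : ℕ)) h
    by_contra hm
    push_neg at hm
    interval_cases m
    · exact (c' x x).elim0
    · obtain ⟨p, hp, hr⟩ := hrc x y hxy
      have h3 := length_ge_three hxy (by simp [hD, hx, hy]) hp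
      have hlen : ((p.zip p.tail).map (fun e => c' e.1 e.2)).length = p.length - 1 := by
        simp [List.length_zip]
      have := nodup_len hr
      omega
  -- assemble
  have h2src : 2 ∈ {m | ∃ c' : ((i : Fin k) × Fin (n i)) → ((i : Fin k) × Fin (n i)) → Fin m,
      IsStrongRainbowConnected D c'} := ⟨c, hstrong⟩
  have h2rc : 2 ∈ {m | ∃ c' : ((i : Fin k) × Fin (n i)) → ((i : Fin k) × Fin (n i)) → Fin m,
      IsRainbowConnected D c'} := ⟨c, hrcconn⟩
  constructor
  · refine le_antisymm (Nat.sInf_le h2rc) ?_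
    obtain ⟨c', hc'⟩ := Nat.sInf_mem (⟨2, h2rc⟩ : Set.Nonempty _)
    exact hlow _ c' hc'
  · refine le_antisymm (Nat.sInf_le h2src) ?_
    obtain ⟨c', hc'⟩ := Nat.sInf_mem (⟨2, h2src⟩ : Set.Nonempty _)
    exact hlow _ c' fun a b hab => let ⟨p, hp, hr, _⟩ := hc' a b hab; ⟨p, hp, hr⟩

end RainbowDigraph
end

section
/- Let D be a strongly connected spanning subdigraph of the biorientation of C_n having exactly k ≥ 1 asymmetric arcs (arcs uv with vu not in D). Then rc*(D) = n - 1 if k ≤ 2, and rc*(D) = n if k ≥ 3. Moreover, if k ≥ 3 then src*(D) = n as well. -/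
open scoped Classical

namespace RainbowDigraph

variable {V : Type}

lemma chain'_mem_zip {D : V → V → Prop} : ∀ {p : List V}, List.Chain' D p →
    ∀ e ∈ p.zip p.tail, D e.1 e.2
  | [], _, e, he => by simp at he
  | [_], _, e, he => by simp at he
  | x :: y :: t, h, e, he => by
    unfold List.Chain' at h
    rw [List.isChain_cons_cons] at h
    rcases (by simpa using he : e = (x, y) ∨ e ∈ (y :: t).zip t) with he | he
    · subst he; exact h.1
    · exact chain'_mem_zip h.2 e (by simpa using he)

lemma steps_range' (f : ℕ → V) : ∀ (L s : ℕ),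
    ((List.range' s (L+1)).map f).zip (((List.range' s (L+1)).map f).tail)
      = (List.range' s L).map (fun m => (f m, f (m+1))) := by
  intro L
  induction L with
  | zero => intro s; simp
  | succ L ih =>
    intro s
    have h1 : List.range' s (L+2) = s :: (s+1) :: List.range' (s+2) L := by
      rw [List.range'_succ, List.range'_succ]
    have h2 : List.range' (s+1) (L+1) = (s+1) :: List.range' (s+2) L := by
      rw [List.range'_succ]
    have h3 : List.range' s (L+1) = s :: List.range' (s+1) L := by
      rw [List.range'_succ]
    rw [h1]
    have ihs := ih (s+1)
    rw [h2] at ihs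
    simp only [List.map_cons, List.zip_cons_cons, List.tail_cons] at ihs ⊢
    rw [ihs, h3]
    simp

lemma walk_steps (f : ℕ → V) (L : ℕ) :
    ((List.range (L+1)).map f).zip (((List.range (L+1)).map f).tail)
      = (List.range L).map (fun m => (f m, f (m+1))) := by
  rw [List.range_eq_range', List.range_eq_range']
  exact steps_range' f L 0

lemma walk_head (f : ℕ → V) (L : ℕ) : ((List.range (L+1)).map f).head? = some (f 0) := by
  rw [List.range_eq_range', List.range'_succ]
  simp

lemma walk_last (f : ℕ → V) (L : ℕ) : ((List.range (L+1)).map f).getLast? = some (f L) := by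
  rw [List.range_succ, List.map_append]
  simp

lemma walk_chain' {D : V → V → Prop} (f : ℕ → V) (L : ℕ) (h : ∀ m < L, D (f m) (f (m+1))) :
    List.Chain' D ((List.range (L+1)).map f) := by
  unfold List.Chain'
  rw [List.isChain_map]
  exact (List.isChain_range_succ _ L).2 h

lemma walk_length (f : ℕ → V) (L : ℕ) : ((List.range (L+1)).map f).length = L + 1 := by simp

variable {n : ℕ} [NeZero n]

lemma zmod_val_roundtrip (z : ZMod n) : ((z.val : ℕ) : ZMod n) = z := by
  rw [ZMod.natCast_val, ZMod.cast_id]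

lemma zmod_val_inj {z w : ZMod n} (h : z.val = w.val) : z = w := by
  rw [← zmod_val_roundtrip z, ← zmod_val_roundtrip w, h]

lemma zmod_add_nat_val (z : ZMod n) (m : ℕ) : (z + (m : ZMod n)).val = (z.val + m) % n := by
  have : z + (m : ZMod n) = ((z.val + m : ℕ) : ZMod n) := by
    push_cast [zmod_val_roundtrip]; ring
  rw [this, ZMod.val_natCast]

lemma zmod_sub_nat_val (z : ZMod n) (m : ℕ) (h : m ≤ z.val) : (z - (m : ZMod n)).val = z.val - m := by
  have : z - (m : ZMod n) = ((z.val - m : ℕ) : ZMod n) := by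
    rw [Nat.cast_sub h, zmod_val_roundtrip]
  rw [this, ZMod.val_natCast, Nat.mod_eq_of_lt (lt_of_le_of_lt (Nat.sub_le _ _) (ZMod.val_lt z))]

lemma zmod_val_add_one {z : ZMod n} (h : z.val + 1 < n) : (z + 1).val = z.val + 1 := by
  have := zmod_add_nat_val z 1
  rw [Nat.cast_one] at this
  rw [this, Nat.mod_eq_of_lt h]
lemma zmod_val_neg_one (hn : 1 < n) : (-1 : ZMod n).val = n - 1 := by
  have h2 : ((n - 1 : ℕ) : ZMod n) + 1 = 0 := by
    have h3 : ((n - 1 : ℕ) : ZMod n) + 1 = ((n - 1 + 1 : ℕ) : ZMod n) := by push_cast; ring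
    rw [h3, (by omega : n - 1 + 1 = n), ZMod.natCast_self]
  have h1 : (-1 : ZMod n) = ((n - 1 : ℕ) : ZMod n) := by linear_combination -h2
  rw [h1, ZMod.val_natCast, Nat.mod_eq_of_lt (by omega)]

section Cross
variable {n : ℕ} [NeZero n] {D : ZMod n → ZMod n → Prop}

lemma cross_aux (hsub : ∀ x y, D x y → cycleBior n x y) (u : ZMod n) (hu : ¬ D (u+1) u)
    {m : ℕ} (hm : m + 1 < n) :
    ∀ p : List (ZMod n), List.Chain' D p → p.getLast? = some u →
      ∀ x, p.head? = some x → (x - (u+1)).val ≤ m →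
        ((u+1) + (m : ZMod n), (u+1) + (m : ZMod n) + 1) ∈ p.zip p.tail
  | [], _, hl, x, hh, _ => by simp at hh
  | [w], _, hl, x, hh, hx => by
    simp at hh hl
    subst hh hl
    have : (w - (w + 1)).val = n - 1 := by
      have h9 : w - (w+1) = -1 := by ring
      rw [h9, zmod_val_neg_one (by omega)]
    omega
  | w :: y :: t, hc, hl, x, hh, hx => by
    simp only [List.head?_cons, Option.some_inj] at hh
    subst hh
    unfold List.Chain' at hc
    rw [List.isChain_cons_cons] at hc
    have hl' : (y :: t).getLast? = some u := by
      rw [List.getLast?_cons_cons] at hl; exact hl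
    have hzip : (w :: y :: t).zip (w :: y :: t).tail = (w, y) :: ((y :: t).zip ((y :: t).tail)) := rfl
    by_cases hb : (y - (u+1)).val ≤ m
    · rw [hzip]
      exact List.mem_cons_of_mem _ (cross_aux hsub u hu hm (y :: t) hc.2 hl' y rfl hb)
    · -- the step (w, y) is the required forward arc
      push_neg at hb
      rcases hsub _ _ hc.1 with hfw | hbw
      · -- y = w + 1
        have hxu : (w - (u+1)).val + 1 < n := by omega
        have hv : (y - (u+1)).val = (w - (u+1)).val + 1 := by
          have : y - (u+1) = (w - (u+1)) + 1 := by rw [hfw]; ring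
          rw [this, zmod_val_add_one hxu]
        have hxm : (w - (u+1)).val = m := by omega
        have hxe : w = (u+1) + (m : ZMod n) := by
          have := zmod_val_roundtrip (w - (u+1))
          rw [hxm] at this
          linear_combination -this
        rw [hzip]
        have he : ((u+1) + (m : ZMod n), (u+1) + (m : ZMod n) + 1) = (w, y) := by
          rw [hfw, hxe]
        rw [he]
        exact List.mem_cons_self
      · -- w = y + 1 : impossible
        by_cases hyu : y = u
        · subst hyu
          rw [hbw] at hc
          exact absurd hc.1 hu
        · have hyv : (y - (u+1)).val < n - 1 := by
            have h1 : (y - (u+1)).val < n := ZMod.val_lt _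
            rcases Nat.lt_or_ge ((y - (u+1)).val) (n-1) with h | h
            · exact h
            · exfalso
              have : (y - (u+1)).val = n - 1 := by omega
              have h2 : y - (u+1) = -1 := by
                have hneg : ((-1 : ZMod n)).val = n - 1 := zmod_val_neg_one (by omega)
                exact zmod_val_inj (by rw [this, hneg])
              apply hyu
              linear_combination h2
          have hv : (w - (u+1)).val = (y - (u+1)).val + 1 := by
            have : w - (u+1) = (y - (u+1)) + 1 := by rw [hbw]; ring
            rw [this, zmod_val_add_one (by omega)]
          omega

lemma cross (hn : 3 ≤ n) (hsub : ∀ x y, D x y → cycleBior n x y) (u : ZMod n)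
    (hu : ¬ D (u+1) u) {p : List (ZMod n)} (hp : IsPathFrom D (u+1) u p) :
    ∀ j : ZMod n, j ≠ u → (j, j+1) ∈ p.zip p.tail := by
  intro j hj
  set m := (j - (u+1)).val with hmdef
  have hm : m + 1 < n := by
    have h1 : m < n := ZMod.val_lt _
    have h2 : m ≠ n - 1 := by
      intro h
      apply hj
      have h3 : j - (u+1) = -1 := zmod_val_inj (by rw [← hmdef, h, zmod_val_neg_one (by omega)])
      linear_combination h3
    omega
  have h0 : ((u+1) - (u+1)).val ≤ m := by simp
  have h4 := cross_aux hsub u hu hm p hp.1 hp.2.2 (u+1) hp.2.1 h0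
  have h5 : (u+1) + (m : ZMod n) = j := by
    rw [hmdef, zmod_val_roundtrip]
    ring
  rwa [h5] at h4

lemma steps_length_ge (hn : 3 ≤ n) (hsub : ∀ x y, D x y → cycleBior n x y) (u : ZMod n)
    (hu : ¬ D (u+1) u) {p : List (ZMod n)} (hp : IsPathFrom D (u+1) u p) :
    n - 1 ≤ (p.zip p.tail).length := by
  classical
  have hinj : Function.Injective (fun j : ZMod n => (j, j+1)) := by
    intro a b h
    exact congrArg Prod.fst h
  have hcard : ((Finset.univ.erase u).image (fun j : ZMod n => (j, j+1))).card = n - 1 := by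
    rw [Finset.card_image_of_injective _ hinj, Finset.card_erase_of_mem (Finset.mem_univ u)]
    rw [Finset.card_univ, ZMod.card]
  have hss : (Finset.univ.erase u).image (fun j : ZMod n => (j, j+1)) ⊆ (p.zip p.tail).toFinset := by
    intro e he
    rw [Finset.mem_image] at he
    obtain ⟨j, hj, rfl⟩ := he
    rw [List.mem_toFinset]
    exact cross hn hsub u hu hp j (Finset.ne_of_mem_erase hj)
  calc n - 1 = ((Finset.univ.erase u).image (fun j : ZMod n => (j, j+1))).card := hcard.symm
    _ ≤ (p.zip p.tail).toFinset.card := Finset.card_le_card hss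
    _ ≤ (p.zip p.tail).length := (p.zip p.tail).toFinset_card_le

lemma one_ne_zero_zmod (hn : 3 ≤ n) : (1 : ZMod n) ≠ 0 := by
  intro h
  have h1 : ((1:ℕ) : ZMod n).val = 1 := ZMod.val_cast_of_lt (by omega)
  rw [Nat.cast_one, h, ZMod.val_zero] at h1
  omega

lemma succ_ne_self_zmod (hn : 3 ≤ n) (u : ZMod n) : u + 1 ≠ u := by
  intro h
  exact one_ne_zero_zmod hn (by linear_combination h)

lemma lower_bound_n1 (hn : 3 ≤ n) (hsub : ∀ x y, D x y → cycleBior n x y) (u : ZMod n)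
    (hu : ¬ D (u+1) u) {K : ℕ} {c : ZMod n → ZMod n → Fin K}
    (hc : IsRainbowConnected D c) : n - 1 ≤ K := by
  obtain ⟨p, hp, hr⟩ := hc (u+1) u (succ_ne_self_zmod hn u)
  have h1 := steps_length_ge hn hsub u hu hp
  have h2 : ((p.zip p.tail).map (fun e => c e.1 e.2)).length ≤ K := by
    have := hr.length_le_card
    rwa [Fintype.card_fin] at this
  rw [List.length_map] at h2
  omega

lemma rainbow_inj (hn : 3 ≤ n) (hsub : ∀ x y, D x y → cycleBior n x y) (u : ZMod n)
    (hu : ¬ D (u+1) u) {K : ℕ} {c : ZMod n → ZMod n → Fin K}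
    (hc : IsRainbowConnected D c) :
    ∀ j j' : ZMod n, j ≠ u → j' ≠ u → c j (j+1) = c j' (j'+1) → j = j' := by
  intro j j' hj hj' hcc
  obtain ⟨p, hp, hr⟩ := hc (u+1) u (succ_ne_self_zmod hn u)
  have h1 := cross hn hsub u hu hp j hj
  have h2 := cross hn hsub u hu hp j' hj'
  have := List.inj_on_of_nodup_map hr h1 h2 hcc
  exact congrArg Prod.fst this

lemma lower_bound_n (hn : 3 ≤ n) (hsub : ∀ x y, D x y → cycleBior n x y)
    (u₁ u₂ u₃ : ZMod n) (h12 : u₁ ≠ u₂) (h13 : u₁ ≠ u₃) (h23 : u₂ ≠ u₃)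
    (hu₁ : ¬ D (u₁+1) u₁) (hu₂ : ¬ D (u₂+1) u₂) (hu₃ : ¬ D (u₃+1) u₃)
    {K : ℕ} {c : ZMod n → ZMod n → Fin K} (hc : IsRainbowConnected D c) : n ≤ K := by
  by_contra hlt
  push_neg at hlt
  have hcard : Fintype.card (Fin K) < Fintype.card (ZMod n) := by
    haveI : NeZero n := ‹_›
    rw [Fintype.card_fin, ZMod.card]
    exact hlt
  obtain ⟨a, b, hab, hgab⟩ := Fintype.exists_ne_map_eq_of_card_lt
    (fun j : ZMod n => c j (j+1)) hcard
  have key : ∀ u : ZMod n, ¬ D (u+1) u → u = a ∨ u = b := by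
    intro u hu
    by_contra h
    push_neg at h
    exact hab (rainbow_inj hn hsub u hu hc a b (Ne.symm h.1) (Ne.symm h.2) hgab)
  rcases key u₁ hu₁ with h1 | h1 <;> rcases key u₂ hu₂ with h2 | h2 <;>
    rcases key u₃ hu₃ with h3 | h3 <;> subst h1 <;> simp_all

end Cross

section Upper

lemma not_nodup_decomp {α : Type} : ∀ {l : List α}, ¬ l.Nodup →
    ∃ (a : α) (l₁ l₂ l₃ : List α), l = l₁ ++ a :: l₂ ++ a :: l₃
  | [], h => absurd List.nodup_nil h
  | x :: rest, h => by
    by_cases hx : x ∈ rest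
    · obtain ⟨s, t, rfl⟩ := List.append_of_mem hx
      exact ⟨x, [], s, t, rfl⟩
    · have hr : ¬ rest.Nodup := by
        intro hnd
        exact h (List.nodup_cons.2 ⟨hx, hnd⟩)
      obtain ⟨a, l₁, l₂, l₃, rfl⟩ := not_nodup_decomp hr
      exact ⟨a, x :: l₁, l₂, l₃, rfl⟩

variable {V : Type}

lemma isPathFrom_shorten {D : V → V → Prop} {x y : V} :
    ∀ (N : ℕ) (p : List V), p.length ≤ N → IsPathFrom D x y p →
    ∃ q, IsPathFrom D x y q ∧ q.Nodup ∧ q.length ≤ p.length := by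
  intro N
  induction N with
  | zero =>
    intro p hp hip
    interval_cases h : p.length
    · rw [List.length_eq_zero_iff] at h
      subst h
      simp [IsPathFrom] at hip
  | succ N ih =>
    intro p hp hip
    by_cases hnd : p.Nodup
    · exact ⟨p, hip, hnd, le_rfl⟩
    obtain ⟨a, l₁, l₂, l₃, rfl⟩ := not_nodup_decomp hnd
    set p := l₁ ++ a :: l₂ ++ a :: l₃ with hpdef
    obtain ⟨hc, hh, hl⟩ := hip
    have hq : IsPathFrom D x y (l₁ ++ a :: l₃) := by
      refine ⟨?_, ?_, ?_⟩
      · unfold List.Chain' at hc ⊢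
        rw [List.isChain_append]
        refine ⟨?_, ?_, ?_⟩
        · exact hc.prefix ⟨a :: l₂ ++ a :: l₃, by simp [hpdef]⟩
        · exact hc.suffix ⟨l₁ ++ a :: l₂, by simp [hpdef]⟩
        · intro u hu v hv
          have h1 : List.Chain' D (l₁ ++ [a]) :=
            hc.prefix ⟨l₂ ++ a :: l₃, by simp [hpdef]⟩
          unfold List.Chain' at h1
          rw [List.isChain_append] at h1
          simp only [List.head?_cons, Option.mem_def, Option.some_inj] at hv
          subst hv
          exact h1.2.2 u hu a (by simp)
      · rw [← hh, hpdef]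
        cases l₁ <;> simp
      · rw [← hl, hpdef]
        have h9 : l₁ ++ a :: l₂ ++ a :: l₃ = (l₁ ++ a :: l₂) ++ (a :: l₃) := by simp
        rw [h9, List.getLast?_append_of_ne_nil _ (by simp),
          List.getLast?_append_of_ne_nil _ (by simp)]
    have hlen : (l₁ ++ a :: l₃).length < p.length := by
      simp [hpdef]
    obtain ⟨q, h1, h2, h3⟩ := ih (l₁ ++ a :: l₃) (by omega) hq
    exact ⟨q, h1, h2, by omega⟩

variable {n : ℕ} [NeZero n]

/-- the `n`-coloring: the two arcs at edge `{x, x+1}` both get color `x.val`. -/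
def cU (n : ℕ) [NeZero n] : ZMod n → ZMod n → Fin n :=
  fun x y => if y = x + 1 then ⟨x.val, ZMod.val_lt x⟩ else ⟨y.val, ZMod.val_lt y⟩

lemma cU_eq {x y a b : ZMod n} (hxy : cycleBior n x y) (hab : cycleBior n a b)
    (h : cU n x y = cU n a b) : (x = a ∧ y = b) ∨ (x = b ∧ y = a) := by
  unfold cU at h
  split_ifs at h with h1 h2 h2
  · have hxa : x = a := zmod_val_inj (congrArg Fin.val h)
    exact Or.inl ⟨hxa, by rw [h1, h2, hxa]⟩
  · have ha : a = b + 1 := hab.resolve_left h2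
    have hxb : x = b := zmod_val_inj (congrArg Fin.val h)
    exact Or.inr ⟨hxb, by rw [h1, hxb, ha]⟩
  · have hx : x = y + 1 := hxy.resolve_left h1
    have hya : y = a := zmod_val_inj (congrArg Fin.val h)
    exact Or.inr ⟨by rw [hx, hya, h2], hya⟩
  · have hx : x = y + 1 := hxy.resolve_left h1
    have ha : a = b + 1 := hab.resolve_left h2
    have hyb : y = b := zmod_val_inj (congrArg Fin.val h)
    exact Or.inl ⟨by rw [hx, hyb, ha], hyb⟩

lemma nodup_rainbow : ∀ {p : List (ZMod n)},
    (∀ e ∈ p.zip p.tail, cycleBior n e.1 e.2) → p.Nodup → RainbowPath (cU n) p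
  | [], _, _ => by simp [RainbowPath]
  | [x], _, _ => by simp [RainbowPath]
  | x :: y :: t, hsub, hnd => by
    have hzip : (x :: y :: t).zip (x :: y :: t).tail
        = (x, y) :: ((y :: t).zip ((y :: t).tail)) := rfl
    unfold RainbowPath
    rw [hzip, List.map_cons, List.nodup_cons]
    constructor
    · intro hmem
      rw [List.mem_map] at hmem
      obtain ⟨e, he, hce⟩ := hmem
      have hab : cycleBior n e.1 e.2 := hsub e (by rw [hzip]; exact List.mem_cons_of_mem _ he)
      have hxy : cycleBior n x y := hsub (x, y) (by rw [hzip]; exact List.mem_cons_self)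
      have hx : x ∈ y :: t := by
        rcases cU_eq hxy hab hce.symm with ⟨h1, _⟩ | ⟨h1, _⟩
        · rw [h1]; exact (List.of_mem_zip he).1
        · rw [h1]; exact List.mem_of_mem_tail (List.of_mem_zip he).2
      exact (List.nodup_cons.1 hnd).1 hx
    · exact nodup_rainbow (fun e he => hsub e (by rw [hzip]; exact List.mem_cons_of_mem _ he))
        (List.nodup_cons.1 hnd).2

/-- the forward walk from `x` to `y` -/
def fwdWalk (x y : ZMod n) : List (ZMod n) :=
  (List.range ((y - x).val + 1)).map (fun (m : ℕ) => x + (m : ZMod n))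

lemma fwdWalk_isPathFrom {D : ZMod n → ZMod n → Prop} (hfwd : ∀ j, D j (j+1))
    (x y : ZMod n) : IsPathFrom D x y (fwdWalk x y) := by
  unfold fwdWalk
  refine ⟨walk_chain' _ _ (fun m hm => ?_), ?_, ?_⟩
  · have h8 : x + ((m+1 : ℕ) : ZMod n) = (x + (m : ℕ)) + 1 := by push_cast; ring
    rw [h8]
    exact hfwd _
  · rw [walk_head]
    simp
  · rw [walk_last]
    congr 1
    rw [zmod_val_roundtrip]
    ring

lemma fwdWalk_nodup (x y : ZMod n) : (fwdWalk x y).Nodup := by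
  unfold fwdWalk
  refine List.Nodup.map_on ?_ List.nodup_range
  intro m hm m' hm' h
  rw [List.mem_range] at hm hm'
  have hv : ((m : ℕ) : ZMod n) = ((m' : ℕ) : ZMod n) := add_left_cancel h
  have h1 : m % n = m' % n := by
    rw [← ZMod.val_natCast, ← ZMod.val_natCast, hv]
  have hlt : (y - x).val < n := ZMod.val_lt _
  rw [Nat.mod_eq_of_lt (by omega), Nat.mod_eq_of_lt (by omega)] at h1
  exact h1

lemma fwdWalk_length (x y : ZMod n) : (fwdWalk x y).length = (y - x).val + 1 := by
  simp [fwdWalk]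

section UpperN
variable {D : ZMod n → ZMod n → Prop}

lemma upper_n (hsub : ∀ x y, D x y → cycleBior n x y) (hfwd : ∀ j, D j (j+1)) :
    IsRainbowConnected D (cU n) := by
  intro x y hxy
  refine ⟨fwdWalk x y, fwdWalk_isPathFrom hfwd x y, ?_⟩
  exact nodup_rainbow
    (fun e he => hsub e.1 e.2 (chain'_mem_zip (fwdWalk_isPathFrom hfwd x y).1 e he))
    (fwdWalk_nodup x y)

lemma upper_n_strong (hsub : ∀ x y, D x y → cycleBior n x y) (hfwd : ∀ j, D j (j+1)) :
    IsStrongRainbowConnected D (cU n) := by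
  intro x y hxy
  have hne : {m | ∃ p, IsPathFrom D x y p ∧ p.length = m + 1}.Nonempty :=
    ⟨(y - x).val, fwdWalk x y, fwdWalk_isPathFrom hfwd x y, fwdWalk_length x y⟩
  obtain ⟨p, hp, hplen⟩ := Nat.sInf_mem hne
  obtain ⟨q, hq, hqnd, hqlen⟩ := isPathFrom_shorten p.length p le_rfl hp
  have hq1 : 1 ≤ q.length := by
    rcases q with _ | ⟨a, q'⟩
    · simp [IsPathFrom] at hq
    · simp
  have hqlen' : q.length = dist D x y + 1 := by
    rcases Nat.exists_eq_add_of_le hq1 with ⟨m, hm⟩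
    have hmem : m ∈ {m | ∃ p, IsPathFrom D x y p ∧ p.length = m + 1} :=
      ⟨q, hq, by omega⟩
    have h1 : dist D x y ≤ m := Nat.sInf_le hmem
    have h2 : dist D x y = sInf {m | ∃ p, IsPathFrom D x y p ∧ p.length = m + 1} := rfl
    omega
  refine ⟨q, hq, ?_, hqlen'⟩
  exact nodup_rainbow (fun e he => hsub e.1 e.2 (chain'_mem_zip hq.1 e he)) hqnd

end UpperN

lemma two_ne_zero_zmod (hn : 3 ≤ n) : (2 : ZMod n) ≠ 0 := by
  intro h
  have h1 : ((2:ℕ) : ZMod n).val = 2 := ZMod.val_cast_of_lt (by omega)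
  rw [Nat.cast_ofNat, h, ZMod.val_zero] at h1
  omega

lemma zmod_sub_val_inj (w : ZMod n) {u v : ZMod n} (h : (u - w).val = (v - w).val) : u = v := by
  have h1 := zmod_val_inj h
  linear_combination h1

lemma sub_val_formula (c x y : ZMod n) :
    (y - x).val = ((y - c).val + n - (x - c).val) % n := by
  have ha : (x - c).val < n := ZMod.val_lt _
  have hb : (y - c).val < n := ZMod.val_lt _
  have h1 : y - x = (((y - c).val + n - (x - c).val : ℕ) : ZMod n) := by
    rw [Nat.cast_sub (by omega), Nat.cast_add, zmod_val_roundtrip, zmod_val_roundtrip,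
      ZMod.natCast_self]
    ring
  rw [h1, ZMod.val_natCast]

/-- the `(n-1)`-coloring used when at most two backward arcs are missing
(missing at positions `i` and `i'`). -/
def cL (n : ℕ) [NeZero n] (hn : 3 ≤ n) (i i' : ZMod n) : ZMod n → ZMod n → Fin (n-1) :=
  fun x y =>
    ⟨(if y = x + 1 then (if x = i' then min ((i - (i'+1)).val) (n-2) else (x - (i'+1)).val)
      else (y - (i'+1)).val) % (n-1), Nat.mod_lt _ (by omega)⟩

lemma gi'_val (hn : 3 ≤ n) (w : ZMod n) : (w - (w+1)).val = n - 1 := by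
  have h1 : w - (w+1) = -1 := by ring
  rw [h1, zmod_val_neg_one (by omega)]

section UpperN1
variable (hn : 3 ≤ n) (i i' : ZMod n)

lemma cL_fwd_step (x : ZMod n) (m : ℕ) :
    cL n hn i i' (x + (m : ZMod n)) (x + ((m+1 : ℕ) : ZMod n))
      = ⟨(if ((x - (i'+1)).val + m) % n = n - 1 then min ((i - (i'+1)).val) (n-2)
          else ((x - (i'+1)).val + m) % n) % (n-1), Nat.mod_lt _ (by omega)⟩ := by
  unfold cL
  have hcond : x + ((m+1 : ℕ) : ZMod n) = (x + (m : ZMod n)) + 1 := by push_cast; ring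
  rw [Fin.mk.injEq]
  rw [if_pos hcond]
  have hg : (x + (m : ZMod n) - (i'+1)).val = ((x - (i'+1)).val + m) % n := by
    have h1 : x + (m : ZMod n) - (i'+1) = (x - (i'+1)) + (m : ZMod n) := by ring
    rw [h1, zmod_add_nat_val]
  by_cases hxi : x + (m : ZMod n) = i'
  · rw [if_pos hxi, if_pos (by rw [← hg, hxi]; exact gi'_val hn i')]
  · rw [if_neg hxi,
      if_neg (fun hc => hxi (zmod_sub_val_inj (i'+1) (by rw [hg, hc, gi'_val hn i'])))]
    rw [hg]

lemma cL_bwd_step (x : ZMod n) (m : ℕ) :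
    cL n hn i i' (x - (m : ZMod n)) (x - ((m+1 : ℕ) : ZMod n))
      = ⟨(x - ((m+1 : ℕ) : ZMod n) - (i'+1)).val % (n-1), Nat.mod_lt _ (by omega)⟩ := by
  unfold cL
  rw [Fin.mk.injEq, if_neg]
  intro hc
  have h2 : (2 : ZMod n) = 0 := by
    push_cast at hc
    linear_combination -hc
  exact two_ne_zero_zmod hn h2

/-- the backward walk from `x` to `y` -/
def bwdWalk (x y : ZMod n) : List (ZMod n) :=
  (List.range ((x - y).val + 1)).map (fun (m : ℕ) => x - (m : ZMod n))

lemma bwdWalk_isPathFrom {D : ZMod n → ZMod n → Prop} {x y : ZMod n}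
    (harc : ∀ m : ℕ, m < (x - y).val → D (x - (m : ZMod n)) (x - ((m+1:ℕ) : ZMod n))) :
    IsPathFrom D x y (bwdWalk x y) := by
  unfold bwdWalk
  refine ⟨walk_chain' _ _ harc, ?_, ?_⟩
  · rw [walk_head]
    simp
  · rw [walk_last]
    congr 1
    rw [zmod_val_roundtrip]
    ring

lemma upper_n1 {D : ZMod n → ZMod n → Prop} (hfwd : ∀ j, D j (j+1))
    (hbk : ∀ j, j ≠ i → j ≠ i' → D (j+1) j) :
    IsRainbowConnected D (cL n hn i i') := by
  intro x y hxy
  set a := (x - (i'+1)).val with hadef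
  set b := (y - (i'+1)).val with hbdef
  set t := (i - (i'+1)).val with htdef
  have ha : a < n := ZMod.val_lt _
  have hb : b < n := ZMod.val_lt _
  have ht : t < n := ZMod.val_lt _
  have hab : a ≠ b := fun h => hxy (zmod_sub_val_inj (i'+1) h)
  by_cases hcase : b < a ∧ ¬ (b ≤ t ∧ t < a)
  · -- backward walk
    obtain ⟨hba, hnt⟩ := hcase
    have hL : (x - y).val = a - b := by
      rw [sub_val_formula (i'+1) y x, ← hadef, ← hbdef]
      have h1 : a + n - b = (a - b) + n := by omega
      rw [h1, Nat.add_mod_right, Nat.mod_eq_of_lt (by omega)]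
    have hgj : ∀ m : ℕ, m < a - b → (x - ((m+1:ℕ) : ZMod n) - (i'+1)).val = a - (m+1) := by
      intro m hm
      have h1 : x - ((m+1:ℕ) : ZMod n) - (i'+1) = (x - (i'+1)) - ((m+1:ℕ) : ZMod n) := by ring
      rw [h1, zmod_sub_nat_val _ _ (by omega)]
    have harc : ∀ m : ℕ, m < (x - y).val → D (x - (m : ZMod n)) (x - ((m+1:ℕ) : ZMod n)) := by
      intro m hm
      rw [hL] at hm
      set j := x - ((m+1:ℕ) : ZMod n) with hjdef
      have hj1 : j + 1 = x - (m : ZMod n) := by rw [hjdef]; push_cast; ring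
      have hgjv : (j - (i'+1)).val = a - (m+1) := hgj m hm
      have hji : j ≠ i := by
        intro hc
        rw [hc] at hgjv
        omega
      have hji' : j ≠ i' := by
        intro hc
        rw [hc, gi'_val hn i'] at hgjv
        omega
      rw [← hj1]
      exact hbk j hji hji'
    refine ⟨bwdWalk x y, bwdWalk_isPathFrom harc, ?_⟩
    unfold RainbowPath bwdWalk
    rw [walk_steps, List.map_map]
    refine List.Nodup.map_on ?_ List.nodup_range
    intro m hm m' hm' h
    rw [List.mem_range, hL] at hm hm'
    have h1 := congrArg Fin.val h
    simp only [Function.comp_apply] at h1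
    rw [cL_bwd_step hn i i', cL_bwd_step hn i i'] at h1
    simp only [] at h1
    rw [hgj m (by omega), hgj m' (by omega)] at h1
    rw [Nat.mod_eq_of_lt (by omega), Nat.mod_eq_of_lt (by omega)] at h1
    omega
  · -- forward walk
    push_neg at hcase
    have hL : (y - x).val = (b + n - a) % n := by
      rw [sub_val_formula (i'+1) x y, ← hadef, ← hbdef]
    have hLval : (y - x).val = if a < b then b - a else b + n - a := by
      rw [hL]
      split_ifs with hab'
      · have h1 : b + n - a = (b - a) + n := by omega
        rw [h1, Nat.add_mod_right, Nat.mod_eq_of_lt (by omega)]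
      · have hba : b < a := by omega
        rw [Nat.mod_eq_of_lt (by omega)]
    refine ⟨fwdWalk x y, fwdWalk_isPathFrom hfwd x y, ?_⟩
    unfold RainbowPath fwdWalk
    rw [walk_steps, List.map_map]
    refine List.Nodup.map_on ?_ List.nodup_range
    intro m hm m' hm' h
    rw [List.mem_range] at hm hm'
    have h1 := congrArg Fin.val h
    simp only [Function.comp_apply] at h1
    rw [cL_fwd_step hn i i', cL_fwd_step hn i i'] at h1
    simp only [← hadef, ← htdef] at h1
    by_cases hab' : a < b
    · -- no wrap
      rw [hLval, if_pos hab'] at hm hm'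
      rw [Nat.mod_eq_of_lt (show a + m < n by omega),
        Nat.mod_eq_of_lt (show a + m' < n by omega)] at h1
      rw [if_neg (by omega), if_neg (by omega)] at h1
      rw [Nat.mod_eq_of_lt (by omega), Nat.mod_eq_of_lt (by omega)] at h1
      omega
    · -- wrap case : b < a and b ≤ t < a
      have hba : b < a := by omega
      have htt : b ≤ t ∧ t < a := hcase hba
      rw [hLval, if_neg hab'] at hm hm'
      have hmin : min t (n-2) = t := by omega
      rw [hmin] at h1
      have e1 : (a + m) % n = if a + m < n then a + m else a + m - n := by
        split_ifs with hw
        · exact Nat.mod_eq_of_lt hw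
        · rw [Nat.mod_eq_sub_mod (by omega), Nat.mod_eq_of_lt (by omega)]
      have e2 : (a + m') % n = if a + m' < n then a + m' else a + m' - n := by
        split_ifs with hw
        · exact Nat.mod_eq_of_lt hw
        · rw [Nat.mod_eq_sub_mod (by omega), Nat.mod_eq_of_lt (by omega)]
      rw [e1, e2] at h1
      have hv1 : (if (if a + m < n then a + m else a + m - n) = n - 1 then t
          else (if a + m < n then a + m else a + m - n)) < n - 1 := by
        split_ifs <;> omega
      have hv2 : (if (if a + m' < n then a + m' else a + m' - n) = n - 1 then t
          else (if a + m' < n then a + m' else a + m' - n)) < n - 1 := by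
        split_ifs <;> omega
      rw [Nat.mod_eq_of_lt hv1, Nat.mod_eq_of_lt hv2] at h1
      split_ifs at h1 <;> omega

end UpperN1
end Upper

section Reverse
variable {V : Type}

lemma steps_concat {α : Type} : ∀ (q : List α) (b x : α), q.getLast? = some b →
    (q ++ [x]).zip ((q ++ [x]).tail) = q.zip q.tail ++ [(b, x)]
  | [], b, x, h => by simp at h
  | [c], b, x, h => by
    simp only [List.getLast?_singleton, Option.some_inj] at h
    subst h
    rfl
  | c :: d :: q', b, x, h => by
    have h' : (d :: q').getLast? = some b := by
      rw [List.getLast?_cons_cons] at h; exact h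
    have ih := steps_concat (d :: q') b x h'
    show (c, d) :: (((d :: q') ++ [x]).zip (((d :: q') ++ [x]).tail))
        = ((c, d) :: ((d :: q').zip q')) ++ [(b, x)]
    rw [ih]
    rfl

lemma steps_reverse {α : Type} : ∀ (p : List α),
    p.reverse.zip p.reverse.tail = ((p.zip p.tail).map Prod.swap).reverse
  | [] => rfl
  | [x] => rfl
  | x :: y :: t => by
    have ih := steps_reverse (y :: t)
    have hlast : (y :: t).reverse.getLast? = some y := by
      rw [List.getLast?_reverse]; rfl
    have h1 : (x :: y :: t).reverse = (y :: t).reverse ++ [x] := by simp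
    rw [h1, steps_concat _ y x hlast, ih]
    show (((y :: t).zip t).map Prod.swap).reverse ++ [(y, x)]
        = (((x, y) :: (y :: t).zip t).map Prod.swap).reverse
    rw [List.map_cons, List.reverse_cons]
    rfl

lemma isPathFrom_reverse {D : V → V → Prop} {x y : V} {p : List V} (h : IsPathFrom D x y p) :
    IsPathFrom (fun a b => D b a) y x p.reverse := by
  obtain ⟨hc, hh, hl⟩ := h
  refine ⟨?_, ?_, ?_⟩
  · unfold List.Chain' at hc ⊢
    rw [List.isChain_reverse]; exact hc
  · rw [List.head?_reverse]; exact hl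
  · rw [List.getLast?_reverse]; exact hh

lemma rainbowPath_reverse {K : ℕ} {c : V → V → Fin K} {p : List V} (h : RainbowPath c p) :
    RainbowPath (fun a b => c b a) p.reverse := by
  unfold RainbowPath at h ⊢
  rw [steps_reverse, List.map_reverse, List.nodup_reverse, List.map_map]
  exact h

lemma dist_reverse (D : V → V → Prop) (x y : V) : dist (fun a b => D b a) y x = dist D x y := by
  unfold dist
  congr 1
  ext m
  constructor
  · rintro ⟨p, hp, hlen⟩
    exact ⟨p.reverse, isPathFrom_reverse hp, by rwa [List.length_reverse]⟩
  · rintro ⟨p, hp, hlen⟩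
    exact ⟨p.reverse, isPathFrom_reverse hp, by rwa [List.length_reverse]⟩

lemma rcStar_reverse (D : V → V → Prop) : rcStar (fun a b => D b a) = rcStar D := by
  unfold rcStar
  congr 1
  ext K
  constructor
  · rintro ⟨c, hc⟩
    refine ⟨fun a b => c b a, fun x y hxy => ?_⟩
    obtain ⟨p, hp, hr⟩ := hc y x (Ne.symm hxy)
    exact ⟨p.reverse, isPathFrom_reverse hp, rainbowPath_reverse hr⟩
  · rintro ⟨c, hc⟩
    refine ⟨fun a b => c b a, fun x y hxy => ?_⟩
    obtain ⟨p, hp, hr⟩ := hc y x (Ne.symm hxy)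
    exact ⟨p.reverse, isPathFrom_reverse hp, rainbowPath_reverse hr⟩

lemma srcStar_reverse (D : V → V → Prop) : srcStar (fun a b => D b a) = srcStar D := by
  unfold srcStar
  congr 1
  ext K
  constructor
  · rintro ⟨c, hc⟩
    refine ⟨fun a b => c b a, fun x y hxy => ?_⟩
    obtain ⟨p, hp, hr, hlen⟩ := hc y x (Ne.symm hxy)
    refine ⟨p.reverse, isPathFrom_reverse hp, rainbowPath_reverse hr, ?_⟩
    rw [List.length_reverse, hlen, dist_reverse]
  · rintro ⟨c, hc⟩
    refine ⟨fun a b => c b a, fun x y hxy => ?_⟩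
    obtain ⟨p, hp, hr, hlen⟩ := hc y x (Ne.symm hxy)
    refine ⟨p.reverse, isPathFrom_reverse hp, rainbowPath_reverse hr, ?_⟩
    rw [List.length_reverse, hlen, ← dist_reverse D]

end Reverse

section Main
variable {n : ℕ} [NeZero n] {D : ZMod n → ZMod n → Prop}

lemma struct (hn : 3 ≤ n) (hsub : ∀ x y, D x y → cycleBior n x y) (hconn : Connected D)
    (u : ZMod n) (hu1 : D u (u+1)) (hu2 : ¬ D (u+1) u) : ∀ j, D j (j+1) := by
  intro j
  by_cases hj : j = u
  · subst hj; exact hu1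
  obtain ⟨p, hp⟩ := hconn (u+1) u
  exact chain'_mem_zip hp.1 _ (cross hn hsub u hu2 hp j hj)

lemma main_le2 (hn : 3 ≤ n) (hsub : ∀ x y, D x y → cycleBior n x y) (hfwd : ∀ j, D j (j+1))
    (u : ZMod n) (hu : ¬ D (u+1) u) (i i' : ZMod n)
    (hbk : ∀ j, j ≠ i → j ≠ i' → D (j+1) j) : rcStar D = n - 1 := by
  have hmem : n - 1 ∈ {K | ∃ c : ZMod n → ZMod n → Fin K, IsRainbowConnected D c} :=
    ⟨cL n hn i i', upper_n1 hn i i' hfwd hbk⟩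
  refine le_antisymm (Nat.sInf_le hmem) ?_
  obtain ⟨c, hc⟩ := Nat.sInf_mem (⟨n - 1, hmem⟩ :
    {K | ∃ c : ZMod n → ZMod n → Fin K, IsRainbowConnected D c}.Nonempty)
  exact lower_bound_n1 hn hsub u hu hc

lemma main_ge3 (hn : 3 ≤ n) (hsub : ∀ x y, D x y → cycleBior n x y) (hfwd : ∀ j, D j (j+1))
    (u₁ u₂ u₃ : ZMod n) (h12 : u₁ ≠ u₂) (h13 : u₁ ≠ u₃) (h23 : u₂ ≠ u₃)
    (hu₁ : ¬ D (u₁+1) u₁) (hu₂ : ¬ D (u₂+1) u₂) (hu₃ : ¬ D (u₃+1) u₃) :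
    rcStar D = n ∧ srcStar D = n := by
  constructor
  · have hmem : n ∈ {K | ∃ c : ZMod n → ZMod n → Fin K, IsRainbowConnected D c} :=
      ⟨cU n, upper_n hsub hfwd⟩
    refine le_antisymm (Nat.sInf_le hmem) ?_
    obtain ⟨c, hc⟩ := Nat.sInf_mem (⟨n, hmem⟩ :
      {K | ∃ c : ZMod n → ZMod n → Fin K, IsRainbowConnected D c}.Nonempty)
    exact lower_bound_n hn hsub u₁ u₂ u₃ h12 h13 h23 hu₁ hu₂ hu₃ hc
  · have hmem : n ∈ {K | ∃ c : ZMod n → ZMod n → Fin K, IsStrongRainbowConnected D c} :=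
      ⟨cU n, upper_n_strong hsub hfwd⟩
    refine le_antisymm (Nat.sInf_le hmem) ?_
    obtain ⟨c, hc⟩ := Nat.sInf_mem (⟨n, hmem⟩ :
      {K | ∃ c : ZMod n → ZMod n → Fin K, IsStrongRainbowConnected D c}.Nonempty)
    have hc' : IsRainbowConnected D c := by
      intro x y hxy
      obtain ⟨p, h1, h2, _⟩ := hc x y hxy
      exact ⟨p, h1, h2⟩
    exact lower_bound_n hn hsub u₁ u₂ u₃ h12 h13 h23 hu₁ hu₂ hu₃ hc'

end Main

lemma cover_of_card_le_two {T : Finset (ZMod n)} [NeZero n] (h : T.card ≤ 2) :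
    ∃ i i' : ZMod n, ∀ j ∈ T, j = i ∨ j = i' := by
  by_cases h0 : T.card = 0
  · exact ⟨0, 0, fun j hj => by rw [Finset.card_eq_zero.1 h0] at hj; simp at hj⟩
  by_cases h1 : T.card = 1
  · obtain ⟨a, ha⟩ := Finset.card_eq_one.1 h1
    exact ⟨a, a, fun j hj => by rw [ha, Finset.mem_singleton] at hj; exact Or.inl hj⟩
  · have h2 : T.card = 2 := by omega
    obtain ⟨a, b, _, hTe⟩ := Finset.card_eq_two.1 h2
    exact ⟨a, b, fun j hj => by rw [hTe] at hj; simpa using hj⟩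

/-- Let `D` be a strongly connected spanning subdigraph of `bior C_n` with
exactly `k ≥ 1` asymmetric arcs. Then `rc*(D) = n - 1` if `k ≤ 2`, and
`rc*(D) = n` if `k ≥ 3`; moreover if `k ≥ 3` then also `src*(D) = n`. -/
theorem stmt11 (n : ℕ) (hn : 3 ≤ n) (A : Finset (ZMod n × ZMod n))
    (hA : ∀ e ∈ A, cycleBior n e.1 e.2)
    (hconn : Connected (fun x y : ZMod n => (x, y) ∈ A))
    (k : ℕ) (hk : 1 ≤ k)
    (hasym : (A.filter (fun e => (e.2, e.1) ∉ A)).card = k) :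
    (k ≤ 2 → rcStar (fun x y : ZMod n => (x, y) ∈ A) = n - 1) ∧
    (3 ≤ k → rcStar (fun x y : ZMod n => (x, y) ∈ A) = n ∧
      srcStar (fun x y : ZMod n => (x, y) ∈ A) = n) := by
  classical
  haveI : NeZero n := ⟨by omega⟩
  set D := fun x y : ZMod n => (x, y) ∈ A with hD
  set F := A.filter (fun e => (e.2, e.1) ∉ A) with hF
  have hsub : ∀ x y, D x y → cycleBior n x y := fun x y h => hA (x, y) h
  obtain ⟨e, heF⟩ : F.Nonempty := Finset.card_pos.1 (by omega)
  have he1 : e ∈ A := (Finset.mem_filter.1 heF).1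
  have he2 : (e.2, e.1) ∉ A := (Finset.mem_filter.1 heF).2
  rcases hA e he1 with hf | hbw
  · -- forward case : e.2 = e.1 + 1
    have hfwd : ∀ j, D j (j+1) := by
      apply struct hn hsub hconn e.1
      · show (e.1, e.1 + 1) ∈ A
        rw [← hf]
        exact he1
      · show (e.1 + 1, e.1) ∉ A
        rw [← hf]
        exact he2
    have hasymchar : ∀ f ∈ F, f.2 = f.1 + 1 ∧ ¬ D (f.1 + 1) f.1 := by
      intro f hf'
      have h1 : f ∈ A := (Finset.mem_filter.1 hf').1
      have h2 : (f.2, f.1) ∉ A := (Finset.mem_filter.1 hf').2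
      rcases hA f h1 with hc | hc
      · refine ⟨hc, ?_⟩
        show (f.1 + 1, f.1) ∉ A
        rw [← hc]
        exact h2
      · exfalso
        apply h2
        show (f.2, f.1) ∈ A
        rw [hc]
        exact hfwd f.2
    constructor
    · intro hk2
      set T := Finset.univ.filter (fun j : ZMod n => ¬ D (j+1) j) with hT
      have hTcard : T.card ≤ k := by
        rw [← hasym]
        apply Finset.card_le_card_of_injOn (fun j => (j, j+1))
        · intro j hj
          rw [Finset.mem_coe, Finset.mem_filter]
          exact ⟨hfwd j, (Finset.mem_filter.1 hj).2⟩
        · intro a _ b _ hab'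
          exact congrArg Prod.fst hab'
      obtain ⟨i, i', hii⟩ := cover_of_card_le_two (by omega : T.card ≤ 2)
      apply main_le2 hn hsub hfwd e.1
      · show (e.1 + 1, e.1) ∉ A
        rw [← hf]
        exact he2
      · intro j hji hji'
        by_contra hc
        rcases hii j (Finset.mem_filter.2 ⟨Finset.mem_univ j, hc⟩) with h | h
        · exact hji h
        · exact hji' h
    · intro hk3
      obtain ⟨e₁, e₂, e₃, h1, h2, h3, h12, h13, h23⟩ :=
        Finset.two_lt_card_iff.1 (by omega : 2 < F.card)
      obtain ⟨hf1, hd1⟩ := hasymchar e₁ h1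
      obtain ⟨hf2, hd2⟩ := hasymchar e₂ h2
      obtain ⟨hf3, hd3⟩ := hasymchar e₃ h3
      have hu12 : e₁.1 ≠ e₂.1 := fun hc => h12 (Prod.ext hc (by rw [hf1, hf2, hc]))
      have hu13 : e₁.1 ≠ e₃.1 := fun hc => h13 (Prod.ext hc (by rw [hf1, hf3, hc]))
      have hu23 : e₂.1 ≠ e₃.1 := fun hc => h23 (Prod.ext hc (by rw [hf2, hf3, hc]))
      exact main_ge3 hn hsub hfwd e₁.1 e₂.1 e₃.1 hu12 hu13 hu23 hd1 hd2 hd3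
  · -- backward case : e.1 = e.2 + 1
    set D' := fun a b : ZMod n => D b a with hD'
    have hsub' : ∀ x y, D' x y → cycleBior n x y := fun x y h => Or.symm (hA (y, x) h)
    have hconn' : Connected D' := by
      intro x y
      obtain ⟨p, hp⟩ := hconn y x
      exact ⟨p.reverse, isPathFrom_reverse hp⟩
    have hfwd' : ∀ j, D' j (j+1) := by
      apply struct hn hsub' hconn' e.2
      · show (e.2 + 1, e.2) ∈ A
        rw [← hbw]
        exact he1
      · show (e.2, e.2 + 1) ∉ A
        rw [← hbw]
        exact he2
    have hrc : rcStar D = rcStar D' := rcStar_reverse D'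
    have hsrc : srcStar D = srcStar D' := srcStar_reverse D'
    have hasymchar : ∀ f ∈ F, f.1 = f.2 + 1 ∧ ¬ D' (f.2 + 1) f.2 := by
      intro f hf'
      have h1 : f ∈ A := (Finset.mem_filter.1 hf').1
      have h2 : (f.2, f.1) ∉ A := (Finset.mem_filter.1 hf').2
      rcases hA f h1 with hc | hc
      · exfalso
        apply h2
        show (f.2, f.1) ∈ A
        rw [hc]
        exact hfwd' f.1
      · refine ⟨hc, ?_⟩
        show (f.2, f.2 + 1) ∉ A
        rw [← hc]
        exact h2
    constructor
    · intro hk2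
      set T := Finset.univ.filter (fun j : ZMod n => ¬ D' (j+1) j) with hT
      have hTcard : T.card ≤ k := by
        rw [← hasym]
        apply Finset.card_le_card_of_injOn (fun j => (j+1, j))
        · intro j hj
          rw [Finset.mem_coe, Finset.mem_filter]
          exact ⟨hfwd' j, (Finset.mem_filter.1 hj).2⟩
        · intro a _ b _ hab'
          exact congrArg Prod.snd hab'
      obtain ⟨i, i', hii⟩ := cover_of_card_le_two (by omega : T.card ≤ 2)
      rw [hrc]
      apply main_le2 hn hsub' hfwd' e.2
      · show (e.2, e.2 + 1) ∉ A
        rw [← hbw]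
        exact he2
      · intro j hji hji'
        by_contra hc
        rcases hii j (Finset.mem_filter.2 ⟨Finset.mem_univ j, hc⟩) with h | h
        · exact hji h
        · exact hji' h
    · intro hk3
      obtain ⟨e₁, e₂, e₃, h1, h2, h3, h12, h13, h23⟩ :=
        Finset.two_lt_card_iff.1 (by omega : 2 < F.card)
      obtain ⟨hf1, hd1⟩ := hasymchar e₁ h1
      obtain ⟨hf2, hd2⟩ := hasymchar e₂ h2
      obtain ⟨hf3, hd3⟩ := hasymchar e₃ h3
      have hu12 : e₁.2 ≠ e₂.2 := fun hc => h12 (Prod.ext (by rw [hf1, hf2, hc]) hc)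
      have hu13 : e₁.2 ≠ e₃.2 := fun hc => h13 (Prod.ext (by rw [hf1, hf3, hc]) hc)
      have hu23 : e₂.2 ≠ e₃.2 := fun hc => h23 (Prod.ext (by rw [hf2, hf3, hc]) hc)
      rw [hrc, hsrc]
      exact main_ge3 hn hsub' hfwd' e₁.2 e₂.2 e₃.2 hu12 hu13 hu23 hd1 hd2 hd3

end RainbowDigraph
end

section
/- For the circulant digraph C_n([k]) with 1 ≤ k ≤ n-2 and generator set [k] = {1,…,k}, we have rc*(C_n([k])) = src*(C_n([k])) = ⌈n/k⌉. -/
open scoped Classical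

namespace RainbowDigraph

variable {V : Type}

section Helpers
variable {n k : ℕ}

/-- the walk from `x` with jump list `l`. -/
def wlk (x : ZMod n) : List ℕ → List (ZMod n)
  | [] => [x]
  | s :: l => x :: wlk (x + (s : ZMod n)) l

@[simp] lemma wlk_nil (x : ZMod n) : wlk x [] = [x] := rfl
@[simp] lemma wlk_cons (x : ZMod n) (s : ℕ) (l : List ℕ) :
    wlk x (s :: l) = x :: wlk (x + (s : ZMod n)) l := rfl

@[simp] lemma wlk_length (x : ZMod n) (l : List ℕ) : (wlk x l).length = l.length + 1 := by
  induction l generalizing x with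
  | nil => rfl
  | cons s l ih => simp [ih]

@[simp] lemma wlk_head (x : ZMod n) (l : List ℕ) : (wlk x l).head? = some x := by
  cases l <;> rfl

@[simp] lemma wlk_last (x : ZMod n) (l : List ℕ) :
    (wlk x l).getLast? = some (x + (l.sum : ZMod n)) := by
  induction l generalizing x with
  | nil => simp
  | cons s l ih =>
    rw [wlk_cons]
    cases l with
    | nil => simp
    | cons t l' =>
      rw [wlk_cons, List.getLast?_cons_cons, ← wlk_cons, ih]
      congr 1
      push_cast [List.sum_cons]
      ring

lemma wlk_chain (x : ZMod n) (l : List ℕ) (h : ∀ s ∈ l, 1 ≤ s ∧ s ≤ k) :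
    List.Chain' (circulant n (Set.Icc 1 k)) (wlk x l) := by
  induction l generalizing x with
  | nil => exact List.isChain_singleton _
  | cons s l ih =>
    rw [wlk_cons, List.Chain', List.isChain_cons]
    refine ⟨?_, ih _ fun s hs => h s (List.mem_cons_of_mem _ hs)⟩
    intro b hb
    rw [wlk_head, Option.mem_some_iff] at hb
    exact ⟨s, by simpa using h s List.mem_cons_self, hb.symm⟩

lemma wlk_isPathFrom (x : ZMod n) (l : List ℕ) (h : ∀ s ∈ l, 1 ≤ s ∧ s ≤ k) :
    IsPathFrom (circulant n (Set.Icc 1 k)) x (x + (l.sum : ZMod n)) (wlk x l) :=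
  ⟨wlk_chain x l h, wlk_head x l, wlk_last x l⟩

lemma isPathFrom_wlk {x y : ZMod n} {p : List (ZMod n)}
    (hp : IsPathFrom (circulant n (Set.Icc 1 k)) x y p) :
    ∃ l : List ℕ, p = wlk x l ∧ (∀ s ∈ l, 1 ≤ s ∧ s ≤ k) ∧ y = x + (l.sum : ZMod n) := by
  induction p generalizing x with
  | nil => simp [IsPathFrom] at hp
  | cons a q ih =>
    obtain ⟨hc, hh, hl⟩ := hp
    rw [List.head?_cons, Option.some_inj] at hh
    subst hh
    cases q with
    | nil =>
      refine ⟨[], rfl, by simp, ?_⟩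
      simp only [List.getLast?_singleton, Option.some_inj] at hl
      simp [hl.symm]
    | cons b t =>
      rw [List.Chain', List.isChain_cons_cons] at hc
      obtain ⟨⟨s, hs, hb⟩, hc2⟩ := hc
      rw [List.getLast?_cons_cons] at hl
      obtain ⟨l, hpl, hmem, hy⟩ := ih (x := b) ⟨hc2, rfl, hl⟩
      refine ⟨s :: l, ?_, ?_, ?_⟩
      · rw [wlk_cons, ← hb, hpl]
      · intro u hu
        rcases List.mem_cons.1 hu with h | h
        · subst h; simpa using hs
        · exact hmem u h
      · rw [hy, hb]; push_cast [List.sum_cons]; ring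


def colorList (c : ZMod n → ZMod n → Fin m) (p : List (ZMod n)) : List (Fin m) :=
  (p.zip p.tail).map (fun e => c e.1 e.2)

@[simp] lemma colorList_singleton (c : ZMod n → ZMod n → Fin m) (x : ZMod n) :
    colorList c [x] = [] := rfl

lemma colorList_wlk_cons (c : ZMod n → ZMod n → Fin m) (x : ZMod n) (s : ℕ) (l : List ℕ) :
    colorList c (wlk x (s :: l)) =
      c x (x + (s : ZMod n)) :: colorList c (wlk (x + (s : ZMod n)) l) := by
  cases l <;> simp [colorList, wlk]

def srcs (x : ZMod n) : List ℕ → List (ZMod n)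
  | [] => []
  | s :: l => x :: srcs (x + (s : ZMod n)) l

lemma colorList_wlk_srcOnly (F : ZMod n → Fin m) (x : ZMod n) (l : List ℕ) :
    colorList (fun u _ => F u) (wlk x l) = (srcs x l).map F := by
  induction l generalizing x with
  | nil => simp [srcs]
  | cons s l ih => rw [colorList_wlk_cons, ih]; simp [srcs]

lemma srcs_replicate_append (v : ZMod n) (c u : ℕ) :
    srcs v (List.replicate c k ++ [u]) =
      (List.range (c + 1)).map (fun j => v + ((j * k : ℕ) : ZMod n)) := by
  induction c generalizing v with
  | zero => simp [srcs, List.range_succ]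
  | succ c ih =>
    rw [List.replicate_succ, List.cons_append]
    show v :: srcs (v + (k : ZMod n)) _ = _
    rw [ih, List.range_succ_eq_map (n := c + 1)]
    simp only [List.map_cons, List.map_map]
    congr 1
    · simp
    · refine List.map_congr_left fun j _ => ?_
      show v + (k : ZMod n) + ((j * k : ℕ) : ZMod n) = v + (((j + 1) * k : ℕ) : ZMod n)
      push_cast
      ring

lemma srcs_geo (x : ZMod n) (t c u : ℕ) :
    srcs x (t :: (List.replicate c k ++ [u])) =
      x :: (List.range (c + 1)).map (fun j => x + (((t + j * k : ℕ)) : ZMod n)) := by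
  show x :: srcs (x + (t : ZMod n)) _ = _
  rw [srcs_replicate_append]
  congr 1
  refine List.map_congr_left fun j _ => ?_
  push_cast
  ring

lemma colorList_wlk_replicate (c : ZMod n → ZMod n → Fin m) (x : ZMod n) (L : ℕ) :
    colorList c (wlk x (List.replicate L k)) =
      (List.range L).map (fun j => c (x + ((j * k : ℕ) : ZMod n))
        (x + ((j * k : ℕ) : ZMod n) + (k : ZMod n))) := by
  induction L generalizing x with
  | zero => simp
  | succ L ih =>
    rw [List.replicate_succ, colorList_wlk_cons, ih, List.range_succ_eq_map (n := L)]
    simp only [List.map_cons, List.map_map]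
    congr 1
    · simp
    · refine List.map_congr_left fun j _ => ?_
      show c (x + (k:ZMod n) + ((j * k : ℕ) : ZMod n)) _ = c (x + (((j+1) * k : ℕ) : ZMod n)) _
      push_cast
      ring_nf

end Helpers

lemma div_lt_div_of_add_le {k c d : ℕ} (hk : 1 ≤ k) (h : c + k ≤ d) : c / k < d / k := by
  have h1 : (c + k) / k = c / k + 1 := Nat.add_div_right c hk
  have h2 : (c + k) / k ≤ d / k := Nat.div_le_div_right h
  omega

lemma coreNat (n k : ℕ) (hk : 1 ≤ k) (xv t q1 : ℕ) (hxv : xv < n)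
    (h1 : k ≤ xv % k + t) (h2 : t + (q1 - 1) * k + xv % k < n) :
    (xv / k :: (List.range q1).map (fun j => ((xv + t + j * k) % n) / k)).Nodup := by
  have hk0 : 0 < k := hk
  have hdm : k * (xv / k) + xv % k = xv := Nat.div_add_mod xv k
  have hja : ∀ j, j < q1 → xv + t + j * k < n + k * (xv / k) := by
    intro j hj
    have : j * k ≤ (q1 - 1) * k := Nat.mul_le_mul_right k (by omega)
    omega
  have hmod : ∀ j, j < q1 → (xv + t + j * k) % n =
      if xv + t + j * k < n then xv + t + j * k else xv + t + j * k - n := by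
    intro j hj
    split
    · exact Nat.mod_eq_of_lt ‹_›
    · rw [Nat.mod_eq_sub_mod (by omega)]
      refine Nat.mod_eq_of_lt ?_
      have := hja j hj
      omega
  have hmulle : k * (xv / k) ≤ xv := by omega
  have hlow : ∀ j, j < q1 → xv + t + j * k < n → xv / k + 1 ≤ (xv + t + j * k) / k := by
    intro j hj _
    rw [Nat.le_div_iff_mul_le hk0]
    have : j * k ≥ 0 := Nat.zero_le _
    calc (xv / k + 1) * k = k * (xv / k) + k := by ring
    _ ≤ xv + t := by omega
    _ ≤ xv + t + j * k := by omega
  have hhigh : ∀ j, j < q1 → n ≤ xv + t + j * k → (xv + t + j * k - n) / k < xv / k := by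
    intro j hj hw
    rw [Nat.div_lt_iff_lt_mul hk0]
    have hcomm : xv / k * k = k * (xv / k) := Nat.mul_comm _ _
    have hjb : j * k ≤ (q1 - 1) * k := Nat.mul_le_mul_right k (by omega)
    omega
  have hmono : ∀ i j, i < j → xv + t + i * k + k ≤ xv + t + j * k := by
    intro i j hij
    have : i * k + k ≤ j * k := by
      calc i * k + k = (i + 1) * k := by ring
      _ ≤ j * k := Nat.mul_le_mul_right k (by omega)
    omega
  rw [List.nodup_cons]
  constructor
  · intro hmem
    rw [List.mem_map] at hmem
    obtain ⟨j, hj, hfj⟩ := hmem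
    rw [List.mem_range] at hj
    rw [hmod j hj] at hfj
    by_cases hw : xv + t + j * k < n
    · rw [if_pos hw] at hfj
      have := hlow j hj hw
      omega
    · rw [if_neg hw] at hfj
      have := hhigh j hj (by omega)
      omega
  · refine List.Nodup.map_on ?_ (List.nodup_range (n := q1))
    intro i hi j hj hij
    rw [List.mem_range] at hi hj
    by_contra hne
    -- wlog i < j
    rcases Nat.lt_trichotomy i j with h | h | h
    · -- i < j
      rw [hmod i hi, hmod j hj] at hij
      by_cases hwj : xv + t + j * k < n
      · have hwi : xv + t + i * k < n := by have := hmono i j h; omega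
        rw [if_pos hwi, if_pos hwj] at hij
        exact absurd hij (Nat.ne_of_lt (div_lt_div_of_add_le hk (hmono i j h)))
      · rw [if_neg hwj] at hij
        by_cases hwi : xv + t + i * k < n
        · rw [if_pos hwi] at hij
          have h1' := hlow i hi hwi
          have h2' := hhigh j hj (by omega)
          omega
        · rw [if_neg hwi] at hij
          have : (xv + t + i * k - n) + k ≤ xv + t + j * k - n := by
            have := hmono i j h
            omega
          exact absurd hij (Nat.ne_of_lt (div_lt_div_of_add_le hk this))
    · exact hne h
    · -- j < i, symmetric
      rw [hmod i hi, hmod j hj] at hij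
      by_cases hwi : xv + t + i * k < n
      · have hwj : xv + t + j * k < n := by have := hmono j i h; omega
        rw [if_pos hwi, if_pos hwj] at hij
        exact absurd hij.symm (Nat.ne_of_lt (div_lt_div_of_add_le hk (hmono j i h)))
      · rw [if_neg hwi] at hij
        by_cases hwj : xv + t + j * k < n
        · rw [if_pos hwj] at hij
          have h1' := hlow j hj hwj
          have h2' := hhigh i hi (by omega)
          omega
        · rw [if_neg hwj] at hij
          have : (xv + t + j * k - n) + k ≤ xv + t + i * k - n := by
            have := hmono j i h
            omega
          exact absurd hij.symm (Nat.ne_of_lt (div_lt_div_of_add_le hk this))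

section Helpers2
variable {n k : ℕ}

lemma ceil_facts (hk : 1 ≤ k) (d : ℕ) (hd : 1 ≤ d) :
    1 ≤ (d + k - 1) / k ∧ ((d + k - 1) / k - 1) * k < d ∧ d ≤ ((d + k - 1) / k) * k := by
  set q := (d + k - 1) / k with hq
  have h0 := Nat.div_add_mod (d + k - 1) k
  rw [← hq] at h0
  have hr : (d + k - 1) % k < k := Nat.mod_lt _ (by omega)
  have hc : k * q = q * k := Nat.mul_comm _ _
  have hsub : (q - 1) * k = q * k - 1 * k := Nat.sub_mul q 1 k
  have hq1 : 1 ≤ q := by rw [hq, Nat.one_le_div_iff (by omega : 0 < k)]; omega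
  refine ⟨hq1, ?_, ?_⟩ <;> omega

lemma path_sum_le [NeZero n] (hk : 1 ≤ k) {x y : ZMod n} {p : List (ZMod n)} {m : ℕ}
    (hp : IsPathFrom (circulant n (Set.Icc 1 k)) x y p) (hlen : p.length = m + 1)
    (hxy : x ≠ y) : (y - x).val ≤ m * k ∧ 1 ≤ m := by
  obtain ⟨l, rfl, hmem, hy⟩ := isPathFrom_wlk hp
  rw [wlk_length] at hlen
  have hlm : l.length = m := by omega
  have hsum_mod : l.sum % n = (y - x).val := by
    have : ((l.sum : ℕ) : ZMod n) = y - x := by rw [hy]; ring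
    rw [← this, ZMod.val_natCast]
  have hub : l.sum ≤ m * k := by
    have := List.sum_le_card_nsmul l k (fun s hs => (hmem s hs).2)
    rw [hlm] at this
    simpa [smul_eq_mul] using this
  have hm1 : 1 ≤ m := by
    rcases Nat.eq_zero_or_pos m with h0 | h; swap; · exact h
    subst h0
    rw [List.length_eq_zero_iff] at hlm
    subst hlm
    simp at hsum_mod
    exact absurd (by rw [← ZMod.val_eq_zero, ← hsum_mod] : y - x = 0)
      (sub_ne_zero.mpr hxy.symm)
  have hdn : (y - x).val < n := ZMod.val_lt _
  by_contra hcon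
  push_neg at hcon
  have : l.sum < n := by omega
  rw [Nat.mod_eq_of_lt this] at hsum_mod
  omega

lemma dist_eq_s13 [NeZero n] (hk : 1 ≤ k) (x y : ZMod n) (hxy : x ≠ y) :
    dist (circulant n (Set.Icc 1 k)) x y = ((y - x).val + k - 1) / k := by
  set d := (y - x).val with hd
  have hd1 : 1 ≤ d := by
    rcases Nat.eq_zero_or_pos d with h0 | h; swap; · exact h
    exact absurd ((ZMod.val_eq_zero _).1 h0) (sub_ne_zero.mpr hxy.symm)
  obtain ⟨hq1, hq2, hq3⟩ := ceil_facts hk d hd1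
  set q := (d + k - 1) / k with hq
  have hsub : (q - 1) * k = q * k - 1 * k := Nat.sub_mul q 1 k
  have hmem : q ∈ {m | ∃ p, IsPathFrom (circulant n (Set.Icc 1 k)) x y p ∧ p.length = m + 1} := by
    refine ⟨wlk x (List.replicate (q - 1) k ++ [d - (q - 1) * k]), ?_, ?_⟩
    · have hsum : (List.replicate (q - 1) k ++ [d - (q - 1) * k]).sum = d := by
        rw [List.sum_append, List.sum_replicate, smul_eq_mul, List.sum_singleton]
        omega
      have := wlk_isPathFrom (k := k) x (List.replicate (q - 1) k ++ [d - (q - 1) * k]) ?_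
      · rw [hsum] at this
        have hxd : x + ((d : ℕ) : ZMod n) = y := by
          rw [hd, ZMod.natCast_val, ZMod.cast_id]
          ring
        rwa [hxd] at this
      · intro s hs
        rcases List.mem_append.1 hs with h | h
        · rw [List.eq_of_mem_replicate h]; omega
        · rw [List.mem_singleton] at h; omega
    · rw [wlk_length]
      simp only [List.length_append, List.length_replicate, List.length_singleton]
      omega
  refine Nat.le_antisymm (Nat.sInf_le hmem) (le_csInf ⟨q, hmem⟩ ?_)
  rintro m ⟨p, hp, hlen⟩
  obtain ⟨hub, hm1⟩ := path_sum_le hk hp hlen hxy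
  by_contra hcon
  push_neg at hcon
  have : m * k ≤ (q - 1) * k := Nat.mul_le_mul_right k (by omega)
  omega

lemma val_add_nat [NeZero n] (x : ZMod n) (m : ℕ) :
    (x + (m : ZMod n)).val = (x.val + m) % n := by
  calc (x + (m : ZMod n)).val = (((x.val + m : ℕ) : ZMod n)).val := by
        rw [Nat.cast_add, ZMod.natCast_val, ZMod.cast_id]
  _ = (x.val + m) % n := ZMod.val_natCast _ _

lemma Fbound (hk : 1 ≤ k) [NeZero n] (u : ZMod n) : u.val / k < (n + k - 1) / k := by
  have h1 : u.val < n := ZMod.val_lt u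
  have h2 : u.val / k ≤ (n - 1) / k := Nat.div_le_div_right (by omega)
  have h3 : (n + k - 1) / k = (n - 1) / k + 1 := by
    have hn1 : 1 ≤ n := Nat.pos_of_ne_zero (NeZero.ne n)
    rw [show n + k - 1 = (n - 1) + k by omega, Nat.add_div_right _ (by omega : 0 < k)]
  omega

lemma strong_coloring (hk : 1 ≤ k) (hn : k + 2 ≤ n) [NeZero n] :
    IsStrongRainbowConnected (circulant n (Set.Icc 1 k))
      (fun u (_ : ZMod n) => (⟨u.val / k, Fbound hk u⟩ : Fin ((n + k - 1) / k))) := by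
  intro x y hxy
  set F : ZMod n → Fin ((n + k - 1) / k) := fun u => ⟨u.val / k, Fbound hk u⟩ with hF
  obtain ⟨d, hd⟩ : ∃ d, (y - x).val = d := ⟨_, rfl⟩
  have hdn : d < n := hd ▸ ZMod.val_lt _
  have hd1 : 1 ≤ d := by
    rcases Nat.eq_zero_or_pos d with h0 | h; swap; · exact h
    exact absurd ((ZMod.val_eq_zero _).1 (hd.trans h0)) (sub_ne_zero.mpr hxy.symm)
  obtain ⟨hq1, hq2, hq3⟩ := ceil_facts hk d hd1
  obtain ⟨q, hqdef⟩ : ∃ q, (d + k - 1) / k = q := ⟨_, rfl⟩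
  rw [hqdef] at hq1 hq2 hq3
  have hdist : dist (circulant n (Set.Icc 1 k)) x y = q := by
    rw [dist_eq_s13 hk x y hxy, hd, hqdef]
  have hxd : x + ((d : ℕ) : ZMod n) = y := by
    rw [← hd, ZMod.natCast_val, ZMod.cast_id]; ring
  have hA : (q - 1) * k + k = q * k := by
    have h : q - 1 + 1 = q := by omega
    calc (q - 1) * k + k = (q - 1 + 1) * k := by ring
    _ = q * k := by rw [h]
  by_cases hqone : q = 1
  · -- single arc
    refine ⟨wlk x [d], ?_, ?_, ?_⟩
    · have := wlk_isPathFrom (k := k) x [d] ?_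
      · rwa [List.sum_singleton, hxd] at this
      · intro s hs
        rw [List.mem_singleton] at hs
        subst hs
        subst hqone
        omega
    · show (colorList (fun u _ => F u) (wlk x [d])).Nodup
      rw [colorList_wlk_srcOnly]
      simp [srcs]
    · rw [wlk_length, hdist, hqone]
      simp
  · have hq2' : 2 ≤ q := by omega
    have hB : (q - 2) * k + k = (q - 1) * k := by
      have h : q - 2 + 1 = q - 1 := by omega
      calc (q - 2) * k + k = (q - 2 + 1) * k := by ring
      _ = (q - 1) * k := by rw [h]
    have hbk : x.val % k < k := Nat.mod_lt _ (by omega)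
    obtain ⟨b, hbdef⟩ : ∃ b, x.val % k = b := ⟨_, rfl⟩
    rw [hbdef] at hbk
    obtain ⟨rem, hremdef⟩ : ∃ r, d - (q - 1) * k = r := ⟨_, rfl⟩
    have hrem1 : 1 ≤ rem := by omega
    have hremk : rem ≤ k := by omega
    have hremsum : (q - 1) * k + rem = d := by omega
    obtain ⟨t, u, ht1, htk, hu1, huk, hsum, hcond1, hcond2⟩ :
        ∃ t u : ℕ, 1 ≤ t ∧ t ≤ k ∧ 1 ≤ u ∧ u ≤ k ∧ t + ((q - 2) * k + u) = d ∧
          k ≤ b + t ∧ t + (q - 2) * k + b < n := by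
      by_cases hcase : k ≤ b + rem
      · exact ⟨rem, k, hrem1, hremk, by omega, le_refl k, by omega, hcase, by omega⟩
      · exact ⟨k - b, rem + b, by omega, by omega, by omega, by omega, by omega, by omega, by omega⟩
    have hJmem : ∀ s ∈ t :: (List.replicate (q - 2) k ++ [u]), 1 ≤ s ∧ s ≤ k := by
      intro s hs
      rw [List.mem_cons] at hs
      rcases hs with h | h
      · omega
      rcases List.mem_append.1 h with h | h
      · rw [List.eq_of_mem_replicate h]; omega
      · rw [List.mem_singleton] at h; omega
    have hJsum : (t :: (List.replicate (q - 2) k ++ [u])).sum = d := by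
      rw [List.sum_cons, List.sum_append, List.sum_replicate, smul_eq_mul,
        List.sum_singleton]
      exact hsum
    refine ⟨wlk x (t :: (List.replicate (q - 2) k ++ [u])), ?_, ?_, ?_⟩
    · have := wlk_isPathFrom (k := k) x (t :: (List.replicate (q - 2) k ++ [u])) hJmem
      rwa [hJsum, hxd] at this
    · show (colorList (fun u _ => F u) _).Nodup
      rw [colorList_wlk_srcOnly, srcs_geo]
      have hnat := coreNat n k hk x.val t (q - 1) (ZMod.val_lt x)
        (by rw [hbdef]; exact hcond1)
        (by rw [hbdef, show q - 1 - 1 = q - 2 by omega]; exact hcond2)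
      refine List.Nodup.of_map Fin.val ?_
      have heq : List.map Fin.val
          ((x :: (List.range (q - 2 + 1)).map (fun j => x + (((t + j * k : ℕ)) : ZMod n))).map F) =
          x.val / k :: (List.range (q - 1)).map (fun j => ((x.val + t + j * k) % n) / k) := by
        rw [List.map_cons, List.map_cons, List.map_map, List.map_map]
        congr 1
        rw [show q - 2 + 1 = q - 1 by omega]
        refine List.map_congr_left fun j _ => ?_
        show (x + (((t + j * k : ℕ)) : ZMod n)).val / k = ((x.val + t + j * k) % n) / k
        rw [val_add_nat, Nat.add_assoc]
      rw [heq]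
      exact hnat
    · rw [wlk_length, hdist]
      simp only [List.length_cons, List.length_append, List.length_replicate,
        List.length_nil]
      omega

lemma colorList_length {m : ℕ} (c : ZMod n → ZMod n → Fin m) (p : List (ZMod n)) :
    (colorList c p).length = p.length - 1 := by
  rw [colorList, List.length_map, List.length_zip, List.length_tail]
  omega

lemma rainbowPath_iff {m : ℕ} (c : ZMod n → ZMod n → Fin m) (p : List (ZMod n)) :
    RainbowPath c p ↔ (colorList c p).Nodup := Iff.rfl

lemma list_len_le_sum (l : List ℕ) (h : ∀ s ∈ l, 1 ≤ s) : l.length ≤ l.sum := by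
  induction l with
  | nil => simp
  | cons s t ih =>
    rw [List.length_cons, List.sum_cons]
    have h1 := h s List.mem_cons_self
    have h2 := ih fun u hu => h u (List.mem_cons_of_mem _ hu)
    omega

lemma sum_eq_replicate (l : List ℕ) (hub : ∀ s ∈ l, s ≤ k)
    (hsum : l.sum = l.length * k) : l = List.replicate l.length k := by
  induction l with
  | nil => simp
  | cons s t ih =>
    have h1 := hub s List.mem_cons_self
    have h2 : t.sum ≤ t.length * k := by
      have := List.sum_le_card_nsmul t k (fun u hu => hub u (List.mem_cons_of_mem _ hu))
      simpa [smul_eq_mul] using this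
    rw [List.sum_cons, List.length_cons] at hsum
    have hsk : (t.length + 1) * k = t.length * k + k := by ring
    have hs : s = k := by omega
    have ht : t.sum = t.length * k := by omega
    rw [List.length_cons, List.replicate_succ, hs,
      ih (fun u hu => hub u (List.mem_cons_of_mem _ hu)) ht]
    simp

lemma neg_one_val [NeZero n] (hn : 2 ≤ n) : (-1 : ZMod n).val = n - 1 := by
  have h1 : ((n - 1 : ℕ) : ZMod n) = -1 := by
    have : ((n : ℕ) : ZMod n) = 0 := ZMod.natCast_self n
    rw [Nat.cast_sub (by omega), this, Nat.cast_one]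
    ring
  rw [← h1, ZMod.val_natCast, Nat.mod_eq_of_lt (by omega)]

lemma ceil_le (hk : 1 ≤ k) (a L : ℕ) (h : a ≤ L * k) : (a + k - 1) / k ≤ L := by
  have h1 : a + k - 1 ≤ (k - 1) + L * k := by omega
  have h2 : (a + k - 1) / k ≤ ((k - 1) + L * k) / k := Nat.div_le_div_right h1
  have h3 : ((k - 1) + L * k) / k = (k - 1) / k + L := Nat.add_mul_div_right _ _ (by omega)
  have h4 : (k - 1) / k = 0 := Nat.div_eq_of_lt (by omega)
  omega

lemma lower_bound [NeZero n] (hk : 1 ≤ k) (hn : k + 2 ≤ n) {m : ℕ}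
    (c : ZMod n → ZMod n → Fin m)
    (hc : IsRainbowConnected (circulant n (Set.Icc 1 k)) c) :
    (n + k - 1) / k ≤ m := by
  have hn3 : 3 ≤ n := by omega
  haveI : Fact (1 < n) := ⟨by omega⟩
  have hne : ∀ x : ZMod n, x ≠ x - 1 := by
    intro x h
    have : (1 : ZMod n) = 0 := by linear_combination h
    exact one_ne_zero this
  have hvalx : ∀ x : ZMod n, ((x - 1) - x).val = n - 1 := by
    intro x
    rw [show (x - 1) - x = -1 by ring, neg_one_val (by omega)]
  -- Step A : for each x, rainbow path from x to x-1 yields jump list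
  have stepA : ∀ x : ZMod n, ∃ l : List ℕ, (∀ s ∈ l, 1 ≤ s ∧ s ≤ k) ∧
      l.length ≤ m ∧ n - 1 ≤ l.length * k ∧ l.sum % n = n - 1 ∧
      (colorList c (wlk x l)).Nodup := by
    intro x
    obtain ⟨p, hp, hrb⟩ := hc x (x - 1) (hne x)
    obtain ⟨l, rfl, hmem, hy⟩ := isPathFrom_wlk hp
    rw [rainbowPath_iff] at hrb
    have hlen : (colorList c (wlk x l)).length = l.length := by
      rw [colorList_length, wlk_length]; omega
    have hm : l.length ≤ m := by
      have := hrb.length_le_card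
      rwa [hlen, Fintype.card_fin] at this
    have hsum_mod : l.sum % n = n - 1 := by
      have h2 : ((l.sum : ℕ) : ZMod n) = (x - 1) - x := by rw [hy]; ring
      have := hvalx x
      rw [← this, ← h2, ZMod.val_natCast]
    have hub : l.sum ≤ l.length * k := by
      have := List.sum_le_card_nsmul l k (fun s hs => (hmem s hs).2)
      simpa [smul_eq_mul] using this
    have hlb : l.length ≤ l.sum := list_len_le_sum l (fun s hs => (hmem s hs).1)
    have hnk : n - 1 ≤ l.length * k := by
      by_contra hcon
      push_neg at hcon
      have hsn : l.sum < n - 1 := by omega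
      rw [Nat.mod_eq_of_lt (by omega)] at hsum_mod
      omega
    exact ⟨l, hmem, hm, hnk, hsum_mod, hrb⟩
  -- m ≥ ceil((n-1)/k)
  have hstep1 : (n - 1 + k - 1) / k ≤ m := by
    obtain ⟨l, hmem, hm, hnk, _, _⟩ := stepA 0
    exact le_trans (ceil_le hk _ _ hnk) hm
  by_cases hdvd : k ∣ n - 1
  · -- hard case
    obtain ⟨e, he⟩ := hdvd
    have hek : k * e = e * k := Nat.mul_comm _ _
    have he2 : 2 ≤ e := by
      by_contra hcon
      push_neg at hcon
      interval_cases e <;> omega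
    have hr : (n + k - 1) / k = e + 1 := by
      have h1 : n + k - 1 = 0 + (e + 1) * k := by
        have : (e + 1) * k = e * k + k := by ring
        omega
      rw [h1, Nat.add_mul_div_right _ _ (by omega : 0 < k), Nat.zero_div]
      omega
    have hr0 : (n - 1 + k - 1) / k = e := by
      have h1 : n - 1 + k - 1 = (k - 1) + e * k := by omega
      rw [h1, Nat.add_mul_div_right _ _ (by omega : 0 < k),
        Nat.div_eq_of_lt (by omega : k - 1 < k)]
      omega
    rw [hr]
    rw [hr0] at hstep1
    by_contra hcon
    push_neg at hcon
    have hme : m = e := by omega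
    subst hme
    -- every x forces the all-k geodesic
    set g : ZMod n → Fin m := fun u => c u (u + ((k : ℕ) : ZMod n)) with hg
    have H : ∀ x : ZMod n,
        ((List.range m).map (fun j => g (x + ((j * k : ℕ) : ZMod n)))).Nodup := by
      intro x
      obtain ⟨l, hmem, hm', hnk, hsmod, hrb⟩ := stepA x
      have hL : l.length = m := by
        have : (n - 1 + k - 1) / k ≤ l.length := ceil_le hk _ _ hnk
        omega
      have hub : l.sum ≤ l.length * k := by
        have := List.sum_le_card_nsmul l k (fun s hs => (hmem s hs).2)
        simpa [smul_eq_mul] using this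
      have hlb : l.length ≤ l.sum := list_len_le_sum l (fun s hs => (hmem s hs).1)
      have hmul : l.length * k ≤ m * k := Nat.mul_le_mul_right k hm'
      have hsum : l.sum = n - 1 := by
        have hlk : l.length * k = n - 1 := by omega
        have hslt : l.sum < n := by omega
        rw [Nat.mod_eq_of_lt hslt] at hsmod
        exact hsmod
      have hrepl : l = List.replicate l.length k :=
        sum_eq_replicate l (fun s hs => (hmem s hs).2) (by omega)
      rw [hrepl, hL] at hrb
      rwa [colorList_wlk_replicate] at hrb
    -- from completeness, g (x - 1) = g x
    have hstep : ∀ x : ZMod n, g (x - 1) = g x := by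
      intro x
      have Hx := H x
      have Hx1 := H (x + ((k : ℕ) : ZMod n))
      have hcard : ((List.range m).map
          (fun j => g (x + ((k : ℕ) : ZMod n) + ((j * k : ℕ) : ZMod n)))).toFinset = Finset.univ := by
        apply Finset.eq_univ_of_card
        rw [List.toFinset_card_of_nodup Hx1, List.length_map, List.length_range,
          Fintype.card_fin]
      have hmem' : g x ∈ (List.range m).map
          (fun j => g (x + ((k : ℕ) : ZMod n) + ((j * k : ℕ) : ZMod n))) := by
        rw [← List.mem_toFinset, hcard]
        exact Finset.mem_univ _
      rw [List.mem_map] at hmem'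
      obtain ⟨j, hj, hgj⟩ := hmem'
      rw [List.mem_range] at hj
      have hrw : x + ((k : ℕ) : ZMod n) + ((j * k : ℕ) : ZMod n)
          = x + (((j + 1) * k : ℕ) : ZMod n) := by push_cast; ring
      rw [hrw] at hgj
      by_cases hje : j + 1 < m
      · exfalso
        have hinj := List.inj_on_of_nodup_map Hx
        have h0 : (0 : ℕ) ∈ List.range m := List.mem_range.mpr (by omega)
        have h1 : j + 1 ∈ List.range m := List.mem_range.mpr hje
        have hval0 : x + ((0 * k : ℕ) : ZMod n) = x := by push_cast; ring
        have : j + 1 = 0 := hinj h1 h0 (by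
          show g (x + (((j + 1) * k : ℕ) : ZMod n)) = g (x + ((0 * k : ℕ) : ZMod n))
          rw [hval0, hgj])
        omega
      · have hjm : j + 1 = m := by omega
        rw [hjm] at hgj
        have hmk : ((m * k : ℕ) : ZMod n) = -1 := by
          have h1 : m * k = n - 1 := by omega
          rw [h1]
          have : ((n : ℕ) : ZMod n) = 0 := ZMod.natCast_self n
          rw [Nat.cast_sub (by omega), this, Nat.cast_one]
          ring
        rw [hmk] at hgj
        rw [show x + -1 = x - 1 by ring] at hgj
        exact hgj
    -- g is constant, contradiction with H
    have hconst : ∀ (j : ℕ) (x : ZMod n), g (x - (j : ZMod n)) = g x := by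
      intro j
      induction j with
      | zero => intro x; simp
      | succ j ih =>
        intro x
        have h1 : x - ((j + 1 : ℕ) : ZMod n) = (x - 1) - (j : ZMod n) := by
          push_cast; ring
        rw [h1, ih (x - 1), hstep x]
    have hgk : ∀ x : ZMod n, g (x + ((k : ℕ) : ZMod n)) = g x := by
      intro x
      have := hconst k (x + ((k : ℕ) : ZMod n))
      rw [show x + ((k : ℕ) : ZMod n) - ((k : ℕ) : ZMod n) = x by ring] at this
      exact this.symm
    have Hx := H 0
    have hinj := List.inj_on_of_nodup_map Hx
    have h0 : (0 : ℕ) ∈ List.range m := List.mem_range.mpr (by omega)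
    have h1 : (1 : ℕ) ∈ List.range m := List.mem_range.mpr (by omega)
    have h2 : (0 : ZMod n) + ((0 * k : ℕ) : ZMod n) = 0 := by push_cast; ring
    have h3 : (0 : ZMod n) + ((1 * k : ℕ) : ZMod n) = 0 + ((k : ℕ) : ZMod n) := by
      push_cast; ring
    have : (0 : ℕ) = 1 := hinj h0 h1 (by
      show g ((0 : ZMod n) + ((0 * k : ℕ) : ZMod n)) = g ((0 : ZMod n) + ((1 * k : ℕ) : ZMod n))
      rw [h2, h3]
      exact (hgk 0).symm)
    omega
  · -- easy case: r = r0
    have h0 := Nat.div_add_mod (n - 1) k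
    have hf1 : 1 ≤ (n - 1) % k := by
      rcases Nat.eq_zero_or_pos ((n - 1) % k) with h | h
      · exact absurd (Nat.dvd_of_mod_eq_zero h) hdvd
      · exact h
    have hfk : (n - 1) % k < k := Nat.mod_lt _ (by omega)
    obtain ⟨e, hedef⟩ : ∃ e, (n - 1) / k = e := ⟨_, rfl⟩
    obtain ⟨f, hfdef⟩ : ∃ f, (n - 1) % k = f := ⟨_, rfl⟩
    rw [hedef] at h0
    rw [hfdef] at h0 hf1 hfk
    have hek : k * e = e * k := Nat.mul_comm _ _
    have hr : (n + k - 1) / k = e + 1 := by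
      have h1 : n + k - 1 = f + (e + 1) * k := by
        have : (e + 1) * k = e * k + k := by ring
        omega
      rw [h1, Nat.add_mul_div_right _ _ (by omega : 0 < k),
        Nat.div_eq_of_lt (by omega : f < k)]
      omega
    have hr0 : (n - 1 + k - 1) / k = e + 1 := by
      have h1 : n - 1 + k - 1 = (f + k - 1) + e * k := by omega
      rw [h1, Nat.add_mul_div_right _ _ (by omega : 0 < k)]
      have : (f + k - 1) / k = 1 := by
        rw [Nat.div_eq_of_lt_le (by omega : 1 * k ≤ f + k - 1) (by omega : f + k - 1 < (1 + 1) * k)]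
      omega
    rw [hr]
    rw [hr0] at hstep1
    exact hstep1

end Helpers2

/-- For `1 ≤ k ≤ n - 2`, `rc*(C_n([k])) = src*(C_n([k])) = ⌈n/k⌉`. -/
theorem stmt13 (n k : ℕ) (h1 : 1 ≤ k) (h2 : k ≤ n - 2) :
    rcStar (circulant n (Set.Icc 1 k)) = (n + k - 1) / k ∧
    srcStar (circulant n (Set.Icc 1 k)) = (n + k - 1) / k := by
  have hn : k + 2 ≤ n := by omega
  haveI : NeZero n := ⟨by omega⟩
  have hstrong := strong_coloring (n := n) (k := k) h1 hn
  have hsrc_mem : (n + k - 1) / k ∈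
      {m | ∃ c : ZMod n → ZMod n → Fin m, IsStrongRainbowConnected (circulant n (Set.Icc 1 k)) c} :=
    ⟨_, hstrong⟩
  have hrc_mem : (n + k - 1) / k ∈
      {m | ∃ c : ZMod n → ZMod n → Fin m, IsRainbowConnected (circulant n (Set.Icc 1 k)) c} :=
    ⟨_, fun x y hxy => (hstrong x y hxy).imp fun p hp => ⟨hp.1, hp.2.1⟩⟩
  constructor
  · refine Nat.le_antisymm (Nat.sInf_le hrc_mem) (le_csInf ⟨_, hrc_mem⟩ ?_)
    rintro m ⟨c, hc⟩
    exact lower_bound h1 hn c hc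
  · refine Nat.le_antisymm (Nat.sInf_le hsrc_mem) (le_csInf ⟨_, hsrc_mem⟩ ?_)
    rintro m ⟨c, hc⟩
    exact lower_bound h1 hn c (fun x y hxy => (hc x y hxy).imp fun p hp => ⟨hp.1, hp.2.1⟩)

end RainbowDigraph
end

section
/- If n = kt + 1 with t ≥ 1 and 2 ≤ k ≤ n - 2, then every arc-coloring of the circulant digraph C_n([k]) with t colors fails to be rainbow connected; hence rc*(C_n([k])) ≥ t + 1. -/
open scoped Classical

namespace RainbowDigraph

variable {V : Type}

/-- Path taking `d` steps of size `a` starting at `x` in `ZMod n`. -/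
def stepPath (n a : ℕ) : ℕ → ZMod n → List (ZMod n)
  | 0, x => [x]
  | d+1, x => x :: stepPath n a d (x + (a : ZMod n))

lemma stepPath_ne_nil (n a d : ℕ) (x : ZMod n) : stepPath n a d x ≠ [] := by
  cases d <;> simp [stepPath]

lemma stepPath_head? (n a d : ℕ) (x : ZMod n) : (stepPath n a d x).head? = some x := by
  cases d <;> simp [stepPath]

lemma stepPath_length (n a d : ℕ) (x : ZMod n) : (stepPath n a d x).length = d + 1 := by
  induction d generalizing x with
  | zero => simp [stepPath]
  | succ d ih => simp [stepPath, ih]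

lemma stepPath_getLast? (n a d : ℕ) (x : ZMod n) :
    (stepPath n a d x).getLast? = some (x + ((d * a : ℕ) : ZMod n)) := by
  induction d generalizing x with
  | zero => simp [stepPath]
  | succ d ih =>
    rw [stepPath]
    rw [List.getLast?_cons, ih]
    simp only [Option.getD_some, Option.some.injEq]
    push_cast; ring

lemma stepPath_chain' {n : ℕ} {D : ZMod n → ZMod n → Prop} {a : ℕ}
    (h : ∀ y : ZMod n, D y (y + (a : ZMod n))) (d : ℕ) (x : ZMod n) :
    List.Chain' D (stepPath n a d x) := by
  induction d generalizing x with
  | zero => exact List.isChain_singleton x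
  | succ d ih =>
    rw [stepPath]
    refine List.isChain_cons.2 ⟨?_, ih _⟩
    intro y hy
    rw [stepPath_head? n a d (x + (a : ZMod n))] at hy
    cases hy
    exact h x

lemma stepPath_colors {n : ℕ} {β : Type} (c : ZMod n → ZMod n → β) (a d : ℕ) (x : ZMod n) :
    (((stepPath n a d x).zip (stepPath n a d x).tail).map (fun e => c e.1 e.2))
      = (List.range d).map
          (fun j => c (x + ((j * a : ℕ) : ZMod n)) (x + (((j+1) * a : ℕ) : ZMod n))) := by
  induction d generalizing x with
  | zero => simp [stepPath]
  | succ d ih =>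
    have hL : (x + (a : ZMod n)) :: (stepPath n a d (x + (a : ZMod n))).tail
        = stepPath n a d (x + (a : ZMod n)) :=
      List.cons_head?_tail (stepPath_head? n a d _)
    rw [stepPath, List.tail_cons]
    conv_lhs => rw [← hL]
    rw [List.zip_cons_cons, List.map_cons, hL]
    have htl : (stepPath n a d (x + (a : ZMod n))).tail
        = ((x + (a : ZMod n)) :: (stepPath n a d (x + (a : ZMod n))).tail).tail := by
      rw [List.tail_cons]
    conv_lhs => rw [htl, hL]
    rw [ih]
    rw [List.range_succ_eq_map, List.map_cons, List.map_map]
    congr 1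
    · have h0 : x + ((0 * a : ℕ) : ZMod n) = x := by push_cast; ring
      have h1 : x + (((0+1) * a : ℕ) : ZMod n) = x + (a : ZMod n) := by push_cast; ring
      simp only [h0, h1]
    · apply List.map_congr_left
      intro j hj
      have h1 : (x + (a : ZMod n)) + ((j * a : ℕ) : ZMod n)
          = x + (((j+1) * a : ℕ) : ZMod n) := by push_cast; ring
      have h2 : (x + (a : ZMod n)) + (((j+1) * a : ℕ) : ZMod n)
          = x + (((j+1+1) * a : ℕ) : ZMod n) := by push_cast; ring
      simp only [Function.comp_apply, Nat.succ_eq_add_one, h1, h2]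

lemma all_eq_of_sum {k : ℕ} :
    ∀ (s : List ℕ), (∀ a ∈ s, a ≤ k) → s.sum = s.length * k → ∀ a ∈ s, a = k := by
  intro s
  induction s with
  | nil => simp
  | cons b s ih =>
    intro hb hsum a ha
    have h1 : s.sum ≤ s.length * k := by
      have := List.sum_le_card_nsmul s k (fun x hx => hb x (List.mem_cons_of_mem _ hx))
      simpa [smul_eq_mul] using this
    have hbk : b ≤ k := hb b List.mem_cons_self
    rw [List.sum_cons, List.length_cons, Nat.succ_mul] at hsum
    have hb' : b = k := by omega
    have hs' : s.sum = s.length * k := by omega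
    rcases List.mem_cons.1 ha with rfl | ha'
    · exact hb'
    · exact ih (fun x hx => hb x (List.mem_cons_of_mem _ hx)) hs' a ha'

lemma decomp {n k : ℕ} {β : Type} (c : ZMod n → ZMod n → β) :
    ∀ (p : List (ZMod n)) (x y : ZMod n),
      List.Chain' (circulant n (Set.Icc 1 k)) p →
      p.head? = some x → p.getLast? = some y →
      ∃ s : List ℕ, s.length + 1 = p.length ∧ (∀ a ∈ s, 1 ≤ a ∧ a ≤ k) ∧
        y = x + ((s.sum : ℕ) : ZMod n) ∧
        ((∀ a ∈ s, a = k) →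
          ((p.zip p.tail).map (fun e => c e.1 e.2)) =
            (List.range s.length).map
              (fun j => c (x + ((j * k : ℕ) : ZMod n)) (x + (((j+1) * k : ℕ) : ZMod n)))) := by
  intro p
  induction p with
  | nil => intro x y _ hh _; simp at hh
  | cons v q ih =>
    intro x y hch hh hl
    have hxv : v = x := by simpa using hh
    subst hxv
    cases q with
    | nil =>
      refine ⟨[], by simp, by simp, ?_, by simp⟩
      have hvy : v = y := by simpa using hl
      simp [← hvy]
    | cons w r =>
      replace hch := List.isChain_cons_cons.1 hch
      obtain ⟨hvw, hch'⟩ := hch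
      obtain ⟨a, haI, hw⟩ := hvw
      rw [Set.mem_Icc] at haI
      rw [List.getLast?_cons_cons] at hl
      obtain ⟨s', hlen, hbd, hsum, hcol⟩ := ih w y hch' (by simp) hl
      refine ⟨a :: s', by simp at hlen ⊢; omega, ?_, ?_, ?_⟩
      · intro b hb
        rcases List.mem_cons.1 hb with rfl | hb'
        · exact haI
        · exact hbd b hb'
      · rw [hsum, hw, List.sum_cons]
        push_cast; ring
      · intro hall
        have hak : a = k := hall a List.mem_cons_self
        have hcol' := hcol (fun b hb => hall b (List.mem_cons_of_mem _ hb))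
        rw [List.tail_cons] at hcol'
        rw [List.tail_cons, List.zip_cons_cons, List.map_cons, hcol']
        rw [List.length_cons, List.range_succ_eq_map, List.map_cons, List.map_map]
        congr 1
        · have h0 : v + ((0 * k : ℕ) : ZMod n) = v := by push_cast; ring
          have h1 : v + (((0+1) * k : ℕ) : ZMod n) = w := by rw [hw, hak]; push_cast; ring
          simp only [h0, h1]
        · apply List.map_congr_left
          intro j hj
          have h1 : w + ((j * k : ℕ) : ZMod n) = v + (((j+1) * k : ℕ) : ZMod n) := by
            rw [hw, hak]; push_cast; ring
          have h2 : w + (((j+1) * k : ℕ) : ZMod n) = v + (((j+1+1) * k : ℕ) : ZMod n) := by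
            rw [hw, hak]; push_cast; ring
          simp only [Function.comp_apply, Nat.succ_eq_add_one, h1, h2]


/-- The color of the `j`-th `k`-jump arc starting from `x`. -/
def wcol {n m : ℕ} (c : ZMod n → ZMod n → Fin m) (k : ℕ) (x : ZMod n) (j : ℕ) : Fin m :=
  c (x + ((j * k : ℕ) : ZMod n)) (x + (((j+1) * k : ℕ) : ZMod n))

lemma wcol_shift {n m : ℕ} (c : ZMod n → ZMod n → Fin m) (k : ℕ) (x : ZMod n) (j : ℕ) :
    wcol c k (x + ((k : ℕ) : ZMod n)) j = wcol c k x (j+1) := by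
  unfold wcol
  congr 1 <;> push_cast <;> ring

lemma wcol_base {n m : ℕ} (c : ZMod n → ZMod n → Fin m) (k : ℕ) (x : ZMod n) (j : ℕ) :
    wcol c k x j = wcol c k (x + ((j * k : ℕ) : ZMod n)) 0 := by
  unfold wcol
  congr 1 <;> push_cast <;> ring

/-- If `n = k·t + 1` with `t ≥ 1` and `2 ≤ k ≤ n - 2`, then no arc-coloring of
`C_n([k])` with `t` colors is rainbow connected; hence `rc*(C_n([k])) ≥ t + 1`. -/
theorem stmt15 (k t : ℕ) (ht : 1 ≤ t) (hk : 2 ≤ k) (hkn : k ≤ k * t + 1 - 2) :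
    (∀ c : ZMod (k * t + 1) → ZMod (k * t + 1) → Fin t,
      ¬ IsRainbowConnected (circulant (k * t + 1) (Set.Icc 1 k)) c) ∧
    t + 1 ≤ rcStar (circulant (k * t + 1) (Set.Icc 1 k)) := by
  have ht2 : 2 ≤ t := by
    rcases Nat.lt_or_ge t 2 with h | h
    · interval_cases t
      rw [mul_one] at hkn; omega
    · exact h
  have hklt : k < k * t + 1 := by nlinarith
  have main : ∀ c : ZMod (k * t + 1) → ZMod (k * t + 1) → Fin t,
      ¬ IsRainbowConnected (circulant (k * t + 1) (Set.Icc 1 k)) c := by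
    intro c hc
    -- Step 1: every window of t consecutive k-jump arc colors is rainbow.
    have hW : ∀ x : ZMod (k * t + 1), ((List.range t).map (wcol c k x)).Nodup := by
      intro x
      have hxy : x ≠ x + ((t * k : ℕ) : ZMod (k * t + 1)) := by
        intro h
        have h0 : ((t * k : ℕ) : ZMod (k * t + 1)) = 0 := (left_eq_add.mp h)
        rw [ZMod.natCast_eq_zero_iff] at h0
        have := Nat.le_of_dvd (by positivity) h0
        nlinarith [mul_comm t k]
      obtain ⟨p, hp, hrb⟩ := hc x _ hxy
      obtain ⟨hch, hh, hl⟩ := hp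
      obtain ⟨s, hlen, hbd, hsum, hcol⟩ := decomp c p x _ hch hh hl
      have hrb' : ((p.zip p.tail).map (fun e => c e.1 e.2)).Nodup := hrb
      have hclen : ((p.zip p.tail).map (fun e => c e.1 e.2)).length = s.length := by
        rw [List.length_map, List.length_zip, List.length_tail, ← hlen]
        omega
      have hmle : s.length ≤ t := by
        have h1 := List.Nodup.length_le_card hrb'
        rwa [hclen, Fintype.card_fin] at h1
      have hsble : s.sum ≤ s.length * k := by
        have := List.sum_le_card_nsmul s k (fun a ha => (hbd a ha).2)
        simpa [smul_eq_mul] using this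
      have hsumeq : s.sum = t * k := by
        have hcast : ((s.sum : ℕ) : ZMod (k * t + 1)) = ((t * k : ℕ) : ZMod (k * t + 1)) :=
          add_left_cancel hsum.symm
        rw [ZMod.natCast_eq_natCast_iff] at hcast
        have hmod := hcast
        unfold Nat.ModEq at hmod
        have hb1 : s.sum < k * t + 1 := by nlinarith [Nat.mul_le_mul_right k hmle]
        have hb2 : t * k < k * t + 1 := by nlinarith
        rwa [Nat.mod_eq_of_lt hb1, Nat.mod_eq_of_lt hb2] at hmod
      have hlget : t ≤ s.length := by
        by_contra hcon
        push_neg at hcon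
        nlinarith [Nat.mul_le_mul_right k (Nat.le_of_lt_succ (Nat.lt_succ_of_lt hcon))]
      have hlen_t : s.length = t := le_antisymm hmle hlget
      have hall : ∀ a ∈ s, a = k :=
        all_eq_of_sum s (fun a ha => (hbd a ha).2) (by rw [hsumeq, hlen_t, mul_comm])
      have hfin := hcol hall
      rw [hfin, hlen_t] at hrb'
      exact hrb'
    -- Step 2: each window is surjective onto the colors.
    have huniv : ∀ (x : ZMod (k * t + 1)) (b : Fin t), ∃ j < t, wcol c k x j = b := by
      intro x b
      have hnd := hW x
      have hcard : ((List.range t).map (wcol c k x)).toFinset = Finset.univ := by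
        apply Finset.eq_univ_of_card
        rw [List.toFinset_card_of_nodup hnd, List.length_map, List.length_range,
          Fintype.card_fin]
      have hb : b ∈ (List.range t).map (wcol c k x) := by
        rw [← List.mem_toFinset, hcard]; exact Finset.mem_univ b
      obtain ⟨j, hj, hjb⟩ := List.mem_map.1 hb
      exact ⟨j, List.mem_range.1 hj, hjb⟩
    have hinj : ∀ (x : ZMod (k * t + 1)) (i j : ℕ), i < t → j < t →
        wcol c k x i = wcol c k x j → i = j := by
      intro x i j hi hj he
      exact List.inj_on_of_nodup_map (hW x) (List.mem_range.2 hi) (List.mem_range.2 hj) he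
    -- Step 3: periodicity wcol x 0 = wcol x t.
    have hper : ∀ x : ZMod (k * t + 1), wcol c k x 0 = wcol c k x t := by
      intro x
      obtain ⟨j, hj, hjb⟩ := huniv (x + ((k : ℕ) : ZMod (k * t + 1))) (wcol c k x 0)
      rw [wcol_shift] at hjb
      by_cases hjt : j + 1 = t
      · rw [hjt] at hjb; exact hjb.symm
      · have : j + 1 < t := by omega
        have h0 := hinj x (j+1) 0 this (by omega) hjb
        omega
    -- Step 4: wcol is constant in x.
    have hneg : ((t * k : ℕ) : ZMod (k * t + 1)) = -1 := by
      have h0 : ((k * t + 1 : ℕ) : ZMod (k * t + 1)) = 0 := ZMod.natCast_self _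
      push_cast at h0 ⊢
      linear_combination h0
    have hstep : ∀ y : ZMod (k * t + 1), wcol c k (y + 1) 0 = wcol c k y 0 := by
      intro y
      have h1 := hper (y + 1)
      rw [wcol_base c k (y+1) t] at h1
      have h2 : (y + 1) + ((t * k : ℕ) : ZMod (k * t + 1)) = y := by rw [hneg]; ring
      rw [h2] at h1
      exact h1
    have hconstN : ∀ m : ℕ, wcol c k ((m : ℕ) : ZMod (k * t + 1)) 0 = wcol c k 0 0 := by
      intro m
      induction m with
      | zero => norm_num
      | succ m ih =>
        have : ((m + 1 : ℕ) : ZMod (k * t + 1)) = ((m : ℕ) : ZMod (k * t + 1)) + 1 := by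
          push_cast; ring
        rw [this, hstep, ih]
    have hconst : ∀ v : ZMod (k * t + 1), wcol c k v 0 = wcol c k 0 0 := by
      intro v
      have hv : ((v.val : ℕ) : ZMod (k * t + 1)) = v := ZMod.natCast_rightInverse v
      rw [← hv]
      exact hconstN v.val
    -- Step 5: contradiction.
    have h01 : wcol c k 0 0 = wcol c k 0 1 := by
      rw [wcol_base c k 0 1]
      exact (hconst _).symm
    exact absurd (hinj 0 0 1 (by omega) (by omega) h01) (by omega)
  refine ⟨main, ?_⟩
  -- A rainbow connected coloring with k*t+1 colors exists.
  have hwit : ∃ c : ZMod (k * t + 1) → ZMod (k * t + 1) → Fin (k * t + 1),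
      IsRainbowConnected (circulant (k * t + 1) (Set.Icc 1 k)) c := by
    refine ⟨fun v _ => ⟨v.val, ZMod.val_lt v⟩, ?_⟩
    intro x y hxy
    have hdpos : (y - x).val ≠ 0 := by
      rw [Ne, ZMod.val_eq_zero, sub_eq_zero]
      exact fun h => hxy h.symm
    refine ⟨stepPath (k * t + 1) 1 (y - x).val x, ⟨?_, stepPath_head? _ _ _ _, ?_⟩, ?_⟩
    · apply stepPath_chain'
      intro z
      exact ⟨1, Set.mem_Icc.2 ⟨le_rfl, by omega⟩, by norm_num⟩
    · rw [stepPath_getLast?]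
      have hv : (((y - x).val : ℕ) : ZMod (k * t + 1)) = y - x :=
        ZMod.natCast_rightInverse (y - x)
      rw [mul_one, hv]
      congr 1
      ring
    · show RainbowPath _ _
      unfold RainbowPath
      rw [stepPath_colors
        (fun v w => (⟨v.val, ZMod.val_lt v⟩ : Fin (k * t + 1))) 1 (y - x).val x]
      apply List.Nodup.map_on _ List.nodup_range
      intro i hi j hj he
      rw [List.mem_range] at hi hj
      have hvlt := ZMod.val_lt (y - x)
      have hval : (x + ((i * 1 : ℕ) : ZMod (k * t + 1))).val
          = (x + ((j * 1 : ℕ) : ZMod (k * t + 1))).val := congrArg Fin.val he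
      have hxixj : x + ((i : ℕ) : ZMod (k * t + 1)) = x + ((j : ℕ) : ZMod (k * t + 1)) := by
        have h1 : ((x + ((i * 1 : ℕ) : ZMod (k * t + 1))).val : ZMod (k * t + 1))
            = x + ((i * 1 : ℕ) : ZMod (k * t + 1)) := ZMod.natCast_rightInverse _
        have h2 : ((x + ((j * 1 : ℕ) : ZMod (k * t + 1))).val : ZMod (k * t + 1))
            = x + ((j * 1 : ℕ) : ZMod (k * t + 1)) := ZMod.natCast_rightInverse _
        have h3 : x + ((i * 1 : ℕ) : ZMod (k * t + 1)) = x + ((j * 1 : ℕ) : ZMod (k * t + 1)) := by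
          rw [← h1, ← h2, hval]
        simpa using h3
      have hij : ((i : ℕ) : ZMod (k * t + 1)) = ((j : ℕ) : ZMod (k * t + 1)) :=
        add_left_cancel hxixj
      rw [ZMod.natCast_eq_natCast_iff] at hij
      unfold Nat.ModEq at hij
      rwa [Nat.mod_eq_of_lt (by omega), Nat.mod_eq_of_lt (by omega)] at hij
  apply le_csInf ⟨k * t + 1, hwit⟩
  intro m hm
  by_contra hlt
  push_neg at hlt
  obtain ⟨c, hc⟩ := hm
  have hmt : m ≤ t := by omega
  apply main (fun x y => Fin.castLE hmt (c x y))
  intro x y hxy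
  obtain ⟨p, hp, hrb⟩ := hc x y hxy
  refine ⟨p, hp, ?_⟩
  unfold RainbowPath at hrb ⊢
  have hmm : ((p.zip p.tail).map (fun e => Fin.castLE hmt (c e.1 e.2)))
      = ((p.zip p.tail).map (fun e => c e.1 e.2)).map (Fin.castLE hmt) := by
    rw [List.map_map]
    rfl
  rw [hmm]
  exact hrb.map (Fin.castLE_injective hmt)


end RainbowDigraph
end

section
/- Let C_n({1,k}) be a circulant digraph with vertices v_0,…,v_{n-1}. If n ≥ (k-1)⌈n/k⌉ then d(v_0, v_i) = ⌊i/k⌋ + (i mod k) for every i, and diam(C_n({1,k})) = ⌊(n-1)/k⌋ + max{(n-1) mod k, k-2}. -/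
open scoped Classical

namespace RainbowDigraph

variable {V : Type}

section Stmt17Aux

lemma aux_path_concat {D : V → V → Prop} {x y z : V} {p : List V}
    (h : IsPathFrom D x y p) (hz : D y z) : IsPathFrom D x z (p ++ [z]) := by
  obtain ⟨hch, hh, hl⟩ := h
  refine ⟨?_, ?_, ?_⟩
  · rw [List.Chain', List.isChain_append]
    refine ⟨hch, List.isChain_singleton z, ?_⟩
    intro a ha b hb
    rw [hl] at ha
    simp only [Option.mem_some_iff, List.head?_cons] at ha hb
    subst ha; subst hb; exact hz
  · cases p with
    | nil => simp at hh
    | cons u q => simpa using hh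
  · simp

lemma aux_step1 {n k : ℕ} (x : ZMod n) : circulant n {1,k} x (x+1) :=
  ⟨1, Or.inl rfl, by norm_num⟩

lemma aux_stepk {n k : ℕ} (x : ZMod n) : circulant n {1,k} x (x+(k:ZMod n)) :=
  ⟨k, Or.inr rfl, rfl⟩

lemma aux_exists_path {n k : ℕ} (a b : ℕ) (x : ZMod n) :
    ∃ p, IsPathFrom (circulant n {1,k}) x (x + ((a + b*k : ℕ) : ZMod n)) p ∧
      p.length = a + b + 1 := by
  induction b with
  | zero =>
    induction a with
    | zero =>
      refine ⟨[x], ⟨List.isChain_singleton x, rfl, ?_⟩, rfl⟩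
      simp
    | succ a iha =>
      obtain ⟨p, hp, hl⟩ := iha
      have he : x + (((a+1) + 0*k : ℕ) : ZMod n) = (x + ((a + 0*k : ℕ) : ZMod n)) + 1 := by
        push_cast; ring
      rw [he]
      exact ⟨p ++ [_], aux_path_concat hp (aux_step1 _), by simp [hl]⟩
  | succ b ihb =>
    obtain ⟨p, hp, hl⟩ := ihb
    have he : x + ((a + (b+1)*k : ℕ) : ZMod n) = (x + ((a + b*k : ℕ) : ZMod n)) + (k : ZMod n) := by
      push_cast; ring
    rw [he]
    refine ⟨p ++ [_], aux_path_concat hp (aux_stepk _), by simp [hl]; omega⟩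

lemma aux_path_decomp {n k : ℕ} : ∀ (p : List (ZMod n)) (x y : ZMod n),
    IsPathFrom (circulant n {1,k}) x y p →
    ∃ a b : ℕ, a + b + 1 = p.length ∧ y = x + ((a + b*k : ℕ) : ZMod n) := by
  intro p
  induction p with
  | nil => rintro x y ⟨_, hh, _⟩; simp at hh
  | cons u q ih =>
    rintro x y ⟨hch, hh, hl⟩
    simp only [List.head?_cons, Option.some.injEq] at hh
    subst hh
    cases q with
    | nil =>
      simp only [List.getLast?_singleton, Option.some.injEq] at hl
      exact ⟨0, 0, rfl, by simp [hl]⟩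
    | cons z q' =>
      obtain ⟨hxz, hch'⟩ := List.isChain_cons_cons.1 hch
      rw [List.getLast?_cons_cons] at hl
      obtain ⟨a, b, hab, hy⟩ := ih z y ⟨hch', rfl, hl⟩
      obtain ⟨s, hs, hz⟩ := hxz
      rcases hs with h1 | hk'
      · refine ⟨a+1, b, by simp [← hab]; omega, ?_⟩
        rw [hy, hz, h1]; push_cast; ring
      · refine ⟨a, b+1, by simp [← hab]; omega, ?_⟩
        rw [hy, hz, hk']; push_cast; ring

lemma aux_f_add {n k : ℕ} (hk : 2 ≤ k) (hn : (k-1)*((n+k-1)/k) ≤ n) (m : ℕ) :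
    m/k + m%k ≤ (m+n)/k + (m+n)%k := by
  have hk0 : 0 < k := by omega
  have hB2 : m/k ≤ (m+n)/k := Nat.div_le_div_right (Nat.le_add_right m n)
  have hB : (m+n)/k ≤ m/k + (n+k-1)/k := by
    calc (m+n)/k ≤ ((n+k-1) + k*(m/k))/k := Nat.div_le_div_right (by
          have h1 := Nat.div_add_mod m k
          have h2 := Nat.mod_lt m hk0
          omega)
      _ = (n+k-1)/k + m/k := Nat.add_mul_div_left _ _ hk0
      _ = m/k + (n+k-1)/k := by omega
  obtain ⟨e, he⟩ : ∃ e, (m+n)/k = m/k + e := ⟨(m+n)/k - m/k, by omega⟩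
  have hec : e ≤ (n+k-1)/k := by omega
  have h1 := Nat.div_add_mod (m+n) k
  have h2 := Nat.div_add_mod m k
  rw [he, Nat.mul_add] at h1
  have hke : k * e = e * (k-1) + e := by
    cases k with
    | zero => omega
    | succ k' => simp [Nat.succ_sub_one]; ring
  have hle : e * (k-1) ≤ n :=
    le_trans (Nat.mul_le_mul_right _ hec) (by rw [mul_comm]; exact hn)
  omega

lemma aux_f_rep {n k : ℕ} (hk : 2 ≤ k) (hn : (k-1)*((n+k-1)/k) ≤ n) (i : ℕ) :
    ∀ q : ℕ, i/k + i%k ≤ (q*n + i)/k + (q*n+i)%k := by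
  intro q
  induction q with
  | zero => simp
  | succ q ih =>
    have h := aux_f_add hk hn (q*n+i)
    have he : (q+1)*n + i = (q*n + i) + n := by ring
    rw [he]
    omega

lemma aux_arith_lb {n k : ℕ} (hk : 2 ≤ k) (hn : (k-1)*((n+k-1)/k) ≤ n) (i a b : ℕ)
    (hi : i < n) (hmod : (a + b*k) % n = i) : i/k + i%k ≤ a + b := by
  have hk0 : 0 < k := by omega
  have hn0 : 0 < n := by omega
  have hM := Nat.div_add_mod (a+b*k) n
  have hcm : ((a+b*k)/n)*n = n*((a+b*k)/n) := mul_comm _ _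
  have hMi : a + b*k = ((a+b*k)/n)*n + i := by omega
  have h1 := aux_f_rep hk hn i ((a+b*k)/n)
  rw [← hMi] at h1
  have hb : b ≤ (a+b*k)/k := (Nat.le_div_iff_mul_le hk0).2 (Nat.le_add_left _ _)
  obtain ⟨e, he⟩ : ∃ e, (a+b*k)/k = b + e := ⟨(a+b*k)/k - b, by omega⟩
  have h2 := Nat.div_add_mod (a+b*k) k
  rw [he, Nat.mul_add] at h2
  have hkb : k * b = b * k := mul_comm _ _
  have hee : e ≤ k * e := Nat.le_mul_of_pos_left e hk0
  omega

lemma aux_arith_ub {n k : ℕ} (hk : 2 ≤ k) (hkn : k ≤ n - 1) (i : ℕ) (hi : i < n) :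
    i/k + i%k ≤ (n-1)/k + max ((n-1)%k) (k-2) := by
  have hk0 : 0 < k := by omega
  have hn0 : 0 < n := by omega
  have hd : i/k ≤ (n-1)/k := Nat.div_le_div_right (by omega)
  have h1 := Nat.div_add_mod i k
  have h2 := Nat.div_add_mod (n-1) k
  have hik := Nat.mod_lt i hk0
  have hmax1 := le_max_left ((n-1)%k) (k-2)
  have hmax2 := le_max_right ((n-1)%k) (k-2)
  rcases eq_or_lt_of_le hd with h | h
  · rw [h] at h1
    omega
  · omega

lemma aux_pathSet_shift {n k : ℕ} (c x y : ZMod n) (m : ℕ)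
    (h : ∃ p, IsPathFrom (circulant n {1,k}) x y p ∧ p.length = m+1) :
    ∃ p, IsPathFrom (circulant n {1,k}) (x+c) (y+c) p ∧ p.length = m+1 := by
  obtain ⟨p, ⟨hch, hh, hl⟩, hlen⟩ := h
  refine ⟨p.map (· + c), ⟨?_, ?_, ?_⟩, by simp [hlen]⟩
  · rw [List.Chain', List.isChain_map]
    exact hch.imp (fun a b ⟨s, hs, hsum⟩ => ⟨s, hs, by rw [hsum]; ring⟩)
  · rw [List.head?_map, hh]; rfl
  · rw [List.getLast?_map, hl]; rfl

lemma aux_dist_shift {n k : ℕ} (c x y : ZMod n) :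
    dist (circulant n {1,k}) (x+c) (y+c) = dist (circulant n {1,k}) x y := by
  unfold dist
  congr 1
  ext m
  constructor
  · intro h
    have h2 := aux_pathSet_shift (-c) (x+c) (y+c) m h
    simpa using h2
  · exact aux_pathSet_shift c x y m

end Stmt17Aux

/-- In `C_n({1,k})` (with `2 ≤ k ≤ n - 1`): if `n ≥ (k-1)·⌈n/k⌉` then
`d(v_0, v_i) = ⌊i/k⌋ + (i mod k)` for every `i`, and
`diam = ⌊(n-1)/k⌋ + max{(n-1) mod k, k - 2}`. -/
theorem stmt17 (n k : ℕ) (hk : 2 ≤ k) (hkn : k ≤ n - 1)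
    (hn : (k - 1) * ((n + k - 1) / k) ≤ n) :
    (∀ i : ℕ, i < n →
      dist (circulant n ({1, k} : Set ℕ)) (0 : ZMod n) (i : ZMod n) = i / k + i % k) ∧
    diam (circulant n ({1, k} : Set ℕ)) = (n - 1) / k + max ((n - 1) % k) (k - 2) := by
  have hn3 : 3 ≤ n := by omega
  haveI : NeZero n := ⟨by omega⟩
  have hk0 : 0 < k := by omega
  have hmem : ∀ i : ℕ, (i/k + i%k) ∈
      {m | ∃ p, IsPathFrom (circulant n ({1,k} : Set ℕ)) (0 : ZMod n) (i : ZMod n) p ∧ p.length = m + 1} := by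
    intro i
    obtain ⟨p, hp, hlen⟩ := aux_exists_path (n := n) (k := k) (i % k) (i / k) 0
    have he : (0 : ZMod n) + ((i % k + (i / k) * k : ℕ) : ZMod n) = (i : ZMod n) := by
      rw [Nat.mod_add_div', zero_add]
    rw [he] at hp
    exact ⟨p, hp, by omega⟩
  have hdist : ∀ i : ℕ, i < n →
      dist (circulant n ({1,k} : Set ℕ)) (0 : ZMod n) (i : ZMod n) = i/k + i%k := by
    intro i hi
    apply le_antisymm
    · exact Nat.sInf_le (hmem i)
    · apply le_csInf ⟨_, hmem i⟩
      rintro m ⟨p, hp, hlen⟩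
      obtain ⟨a, b, hab, hy⟩ := aux_path_decomp p 0 (i : ZMod n) hp
      have hcast : ((a + b*k : ℕ) : ZMod n) = (i : ZMod n) := by
        rw [hy, zero_add]
      have hmod : (a + b*k) % n = i := by
        have h := (ZMod.natCast_eq_natCast_iff' _ _ _).1 hcast
        rwa [Nat.mod_eq_of_lt hi] at h
      have := aux_arith_lb hk hn i a b hi hmod
      omega
  refine ⟨hdist, ?_⟩
  have hboundD : ∀ x y : ZMod n,
      dist (circulant n ({1,k} : Set ℕ)) x y ≤ (n-1)/k + max ((n-1)%k) (k-2) := by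
    intro x y
    have hsh := aux_dist_shift (n := n) (k := k) (-x) x y
    rw [add_neg_cancel, ← sub_eq_add_neg] at hsh
    have hv : (((y - x).val : ℕ) : ZMod n) = y - x := ZMod.natCast_rightInverse _
    have hvlt : (y - x).val < n := ZMod.val_lt _
    rw [← hsh, ← hv, hdist _ hvlt]
    exact aux_arith_ub hk hkn _ hvlt
  set T := {d | ∃ x y, d = dist (circulant n ({1,k} : Set ℕ)) x y} with hT
  have hbdd : BddAbove T := ⟨(n-1)/k + max ((n-1)%k) (k-2), by
    rintro d ⟨x, y, rfl⟩; exact hboundD x y⟩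
  have hq1 : 1 ≤ (n-1)/k := (Nat.one_le_div_iff hk0).2 (by omega)
  have hm1 : (n-1)/k + (n-1)%k ∈ T :=
    ⟨0, ((n-1 : ℕ) : ZMod n), (hdist (n-1) (by omega)).symm⟩
  obtain ⟨q', hq'⟩ : ∃ q', (n-1)/k = q' + 1 := ⟨(n-1)/k - 1, by omega⟩
  have hqk : ((n-1)/k) * k ≤ n - 1 := Nat.div_mul_le_self _ _
  have hi0 : (k-1) + q'*k < n := by
    have h2 : ((n-1)/k)*k = q'*k + k := by rw [hq']; ring
    omega
  have hdiv : ((k-1) + q'*k)/k = q' := by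
    rw [Nat.add_mul_div_right _ _ hk0, Nat.div_eq_of_lt (by omega), zero_add]
  have hmod0 : ((k-1) + q'*k)%k = k-1 := by
    rw [Nat.add_mul_mod_self_right, Nat.mod_eq_of_lt (by omega)]
  have hm2 : (n-1)/k + (k-2) ∈ T := by
    refine ⟨0, (((k-1) + q'*k : ℕ) : ZMod n), ?_⟩
    rw [hdist _ hi0, hdiv, hmod0]
    omega
  apply le_antisymm
  · apply csSup_le ⟨_, hm1⟩
    rintro d ⟨x, y, rfl⟩
    exact hboundD x y
  · rcases le_total ((n-1)%k) (k-2) with h | h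
    · rw [max_eq_right h]
      exact le_csSup hbdd hm2
    · rw [max_eq_left h]
      exact le_csSup hbdd hm1

end RainbowDigraph
end
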